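/- arXiv:2306.15778 — 2 statements merged into one kernel-verified Lean document; each statement's English description precedes it below -/
import Mathlib

section
/- For all integers k ≥ 1, n ≥ 2, and 1 ≤ j ≤ n − 1, the number of k-box paths of size n with exactly j returns is greater than or equal to the number of k-box paths of size n with exactly j + 1 returns. -/
/-- The step alphabet for skew Dyck paths: up, down, left. -/
inductive Step : Type
  | U | D | L
  deriving DecidableEq

/-- Number of U steps in a word. -/
def countU (w : List Step) : ℕ := w.count Step.U
/-- Number of D steps in a word. -/
def countD (w : List Step) : ℕ := w.count Step.D
/-- Number of L steps in a word. -/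
def countL (w : List Step) : ℕ := w.count Step.L

/-- A skew Dyck path: every prefix has at least as many U's as D's and L's combined,
the totals balance, and there is no factor `UL` or `LU`. -/
def IsSkewDyck (w : List Step) : Prop :=
  (∀ p, p <+: w → countD p + countL p ≤ countU p) ∧
  countU w = countD w + countL w ∧
  ¬ [Step.U, Step.L] <:+: w ∧ ¬ [Step.L, Step.U] <:+: w

/-- The semilength of a skew Dyck path is its number of U's. -/
def semilength (w : List Step) : ℕ := countU w

/-- The factor `U D^k L`. -/
def boxFactor (k : ℕ) : List Step := Step.U :: (List.replicate k Step.D ++ [Step.L])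

/-- The number of occurrences (starting positions) of `f` as a factor (contiguous
subword) of `w`. -/
def numOccurrences (f w : List Step) : ℕ :=
  ((Finset.range (w.length + 1)).filter (fun i => f <+: w.drop i)).card

/-- A `k`-box path of size `n`: a skew Dyck path of semilength `(k+2)n - 1` with
exactly `n` occurrences of the factor `U D^k L`. -/
def IsBoxPath (k n : ℕ) (w : List Step) : Prop :=
  IsSkewDyck w ∧ semilength w = (k+2)*n - 1 ∧ numOccurrences (boxFactor k) w = n

/-- Number of returns: positions `i` such that the `(i+1)`-st letter is a `D` or `L`
and the prefix of length `i+1` is balanced (the path returns to the x-axis). -/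
def numReturns (w : List Step) : ℕ :=
  ((Finset.range w.length).filter (fun i =>
    (w[i]? = some Step.D ∨ w[i]? = some Step.L) ∧
    countU (w.take (i+1)) = countD (w.take (i+1)) + countL (w.take (i+1)))).card

/-- Number of long ascents: maximal runs of consecutive U's of length at least 2,
counted via their starting positions. -/
def numLongAscents (w : List Step) : ℕ :=
  ((Finset.range w.length).filter (fun i =>
    w[i]? = some Step.U ∧ w[i+1]? = some Step.U ∧
    (i = 0 ∨ w[i-1]? ≠ some Step.U))).card

/-- The word `U^{a_1} D^k L D U^{a_2} D^k L D ⋯ U^{a_{n-1}} D^k L D U^{a_n} D^k L`. -/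
def boxForm (k : ℕ) : List ℕ → List Step
  | [] => []
  | [a] => List.replicate a Step.U ++ List.replicate k Step.D ++ [Step.L]
  | a :: b :: rest =>
      List.replicate a Step.U ++ List.replicate k Step.D ++ [Step.L, Step.D] ++
        boxForm k (b :: rest)

/-- A block `U^b D^{k-1} L D` of an augmented `k`-Dyck path. -/
def augBlock (k b : ℕ) : List Step :=
  List.replicate b Step.U ++ List.replicate (k-1) Step.D ++ [Step.L, Step.D]

/-- The word `U^{b_1} D^{k-1} L D ⋯ U^{b_m} D^{k-1} L D`. -/
def augForm (k : ℕ) (b : List ℕ) : List Step := (b.map (augBlock k)).flatten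

/-- An augmented `k`-Dyck path: a skew Dyck path of the form
`U^{b_1} D^{k-1} L D ⋯ U^{b_m} D^{k-1} L D` with all `b_i` positive. -/
def IsAugmented (k : ℕ) (w : List Step) : Prop :=
  IsSkewDyck w ∧ ∃ b : List ℕ, (∀ x ∈ b, 0 < x) ∧ w = augForm k b

/-- An augmented `k`-Dyck path of size `m`. -/
def IsAugmentedOfSize (k m : ℕ) (w : List Step) : Prop :=
  IsSkewDyck w ∧ ∃ b : List ℕ, b.length = m ∧ (∀ x ∈ b, 0 < x) ∧ w = augForm k b

/-- A tailed `k`-box path ends with the factor `U^{k+1} D^k L`. -/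
def Tailed (k : ℕ) (w : List Step) : Prop :=
  (List.replicate (k+1) Step.U ++ List.replicate k Step.D ++ [Step.L]) <:+ w

namespace SDP
open Step List

instance : Fintype Step :=
  ⟨{Step.U, Step.D, Step.L}, by intro x; cases x <;> simp⟩

@[simp] lemma countU_nil : countU [] = 0 := rfl
@[simp] lemma countD_nil : countD [] = 0 := rfl
@[simp] lemma countL_nil : countL [] = 0 := rfl
@[simp] lemma countU_cons (c w) : countU (c :: w) = countU w + if c = U then 1 else 0 := by
  simp [countU, List.count_cons]
@[simp] lemma countD_cons (c w) : countD (c :: w) = countD w + if c = D then 1 else 0 := by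
  simp [countD, List.count_cons]
@[simp] lemma countL_cons (c w) : countL (c :: w) = countL w + if c = L then 1 else 0 := by
  simp [countL, List.count_cons]
@[simp] lemma countU_append (v w) : countU (v ++ w) = countU v + countU w := by
  simp [countU]
@[simp] lemma countD_append (v w) : countD (v ++ w) = countD v + countD w := by
  simp [countD]
@[simp] lemma countL_append (v w) : countL (v ++ w) = countL v + countL w := by
  simp [countL]
@[simp] lemma countU_repU (a : ℕ) : countU (List.replicate a U) = a := by
  simp [countU]
@[simp] lemma countD_repU (a : ℕ) : countD (List.replicate a U) = 0 := by
  simp [countD, List.count_replicate]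
@[simp] lemma countL_repU (a : ℕ) : countL (List.replicate a U) = 0 := by
  simp [countL, List.count_replicate]
@[simp] lemma countU_repD (a : ℕ) : countU (List.replicate a D) = 0 := by
  simp [countU, List.count_replicate]
@[simp] lemma countD_repD (a : ℕ) : countD (List.replicate a D) = a := by
  simp [countD]
@[simp] lemma countL_repD (a : ℕ) : countL (List.replicate a D) = 0 := by
  simp [countL, List.count_replicate]

lemma length_eq_counts (w : List Step) : w.length = countU w + countD w + countL w := by
  induction w with
  | nil => simp
  | cons c w ih => cases c <;> simp [ih] <;> omega

/-! occurrences -/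

lemma numOcc_sum (f w) : numOccurrences f w =
    ∑ i ∈ Finset.range (w.length + 1), if f <+: w.drop i then 1 else 0 := by
  rw [numOccurrences, Finset.card_filter]

lemma numOcc_nil {k : ℕ} : numOccurrences (boxFactor k) [] = 0 := by
  simp [numOccurrences, boxFactor]

lemma numOcc_cons (f : List Step) (c w) :
    numOccurrences f (c :: w) = (if f <+: (c :: w) then 1 else 0) + numOccurrences f w := by
  rw [numOcc_sum, numOcc_sum]
  have : (c :: w).length + 1 = w.length + 1 + 1 := by simp
  rw [this, Finset.sum_range_succ']
  simp only [List.drop_succ_cons, List.drop_zero]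
  rw [Nat.add_comm]

lemma numOcc_cons_down {k : ℕ} (c : Step) (w) (hc : c ≠ U) :
    numOccurrences (boxFactor k) (c :: w) = numOccurrences (boxFactor k) w := by
  rw [numOcc_cons]
  have : ¬ (boxFactor k <+: (c :: w)) := by
    simp only [boxFactor, List.cons_prefix_cons]
    rintro ⟨h, -⟩; exact hc h.symm
  simp [this]

lemma numOcc_cons_U {k : ℕ} (w) :
    numOccurrences (boxFactor k) (U :: w) =
      (if (List.replicate k D ++ [L]) <+: w then 1 else 0) + numOccurrences (boxFactor k) w := by
  rw [numOcc_cons]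
  simp [boxFactor, List.cons_prefix_cons]

lemma tf_cons {k : ℕ} (hk : 1 ≤ k) :
    List.replicate k D ++ [L] = D :: (List.replicate (k-1) D ++ [L]) := by
  obtain ⟨k', rfl⟩ : ∃ k', k = k' + 1 := ⟨k - 1, by omega⟩
  simp [List.replicate_succ]

lemma numOcc_Urun {k : ℕ} (hk : 1 ≤ k) (a : ℕ) (w) :
    numOccurrences (boxFactor k) (List.replicate a U ++ w) =
      (if a ≠ 0 ∧ (List.replicate k D ++ [L]) <+: w then 1 else 0)
        + numOccurrences (boxFactor k) w := by
  induction a with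
  | zero => simp
  | succ a ih =>
    rw [List.replicate_succ, List.cons_append, numOcc_cons_U, ih]
    rcases Nat.eq_zero_or_pos a with rfl | ha
    · simp
    · have h1 : ¬ ((List.replicate k D ++ [L]) <+: (List.replicate a U ++ w)) := by
        rw [tf_cons hk]
        obtain ⟨a', rfl⟩ : ∃ a', a = a' + 1 := ⟨a - 1, by omega⟩
        rw [List.replicate_succ, List.cons_append, List.cons_prefix_cons]
        rintro ⟨h, -⟩; cases h
      have h2 : a ≠ 0 := by omega
      simp [h1, h2]

lemma numOcc_downs {k : ℕ} (ds w : List Step) (h : ∀ x ∈ ds, x ≠ U) :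
    numOccurrences (boxFactor k) (ds ++ w) = numOccurrences (boxFactor k) w := by
  induction ds with
  | nil => simp
  | cons c ds ih =>
    rw [List.cons_append, numOcc_cons_down c _ (h c (by simp))]
    exact ih (fun x hx => h x (by simp [hx]))

/-! parsing -/

lemma parse (w : List Step) : ∃ p ds w₂, w = List.replicate p U ++ (ds ++ w₂) ∧
    (∀ x ∈ ds, x ≠ U) ∧ (ds = [] → w₂ = []) ∧ (w₂ = [] ∨ ∃ w₂', w₂ = U :: w₂') := by
  induction w with
  | nil => exact ⟨0, [], [], by simp, by simp, by simp, Or.inl rfl⟩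
  | cons c w ih =>
    obtain ⟨p, ds, w₂, hw, hds, hde, hw₂⟩ := ih
    cases c with
    | U =>
      refine ⟨p + 1, ds, w₂, ?_, hds, hde, hw₂⟩
      rw [List.replicate_succ, List.cons_append, hw]
    | D =>
      rcases Nat.eq_zero_or_pos p with rfl | hp
      · refine ⟨0, D :: ds, w₂, by simpa using hw, ?_, by simp, hw₂⟩
        intro x hx
        rcases List.mem_cons.1 hx with rfl | hx
        · simp
        · exact hds x hx
      · obtain ⟨p', rfl⟩ : ∃ p', p = p' + 1 := ⟨p - 1, by omega⟩
        exact ⟨0, [D], List.replicate (p'+1) U ++ (ds ++ w₂), by simp [hw],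
          by simp, by simp, Or.inr ⟨List.replicate p' U ++ (ds ++ w₂), by
            rw [List.replicate_succ, List.cons_append]⟩⟩
    | L =>
      rcases Nat.eq_zero_or_pos p with rfl | hp
      · refine ⟨0, L :: ds, w₂, by simpa using hw, ?_, by simp, hw₂⟩
        intro x hx
        rcases List.mem_cons.1 hx with rfl | hx
        · simp
        · exact hds x hx
      · obtain ⟨p', rfl⟩ : ∃ p', p = p' + 1 := ⟨p - 1, by omega⟩
        exact ⟨0, [L], List.replicate (p'+1) U ++ (ds ++ w₂), by simp [hw],
          by simp, by simp, Or.inr ⟨List.replicate p' U ++ (ds ++ w₂), by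
            rw [List.replicate_succ, List.cons_append]⟩⟩

lemma dn_downs {ds : List Step} (h : ∀ x ∈ ds, x ≠ U) :
    countD ds + countL ds = ds.length := by
  have : countU ds = 0 := by
    simp only [countU, List.count_eq_zero]
    intro hU; exact h U hU rfl
  have := length_eq_counts ds
  omega

lemma prefix_of_prefix_append {p x y : List Step} (h : p <+: x ++ y)
    (hl : p.length ≤ x.length) : p <+: x := by
  have h1 : p = (x ++ y).take p.length := List.prefix_iff_eq_take.1 h
  have h2 : (x ++ y).take p.length = x.take p.length := List.take_append_of_le_length hl
  rw [h1, h2]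
  exact List.take_prefix _ _

lemma tf_length {k : ℕ} : (List.replicate k D ++ [L]).length = k + 1 := by simp

lemma dsU_len {k : ℕ} {ds w₂' : List Step} (h : (List.replicate k D ++ [L]) <+: ds ++ (U :: w₂')) :
    k + 1 ≤ ds.length := by
  by_contra hlt
  push_neg at hlt
  have h1 : List.replicate k D ++ [L] = (ds ++ (U :: w₂')).take (k+1) := by
    have := List.prefix_iff_eq_take.1 h
    rwa [tf_length] at this
  rw [List.take_append] at h1
  have h2 : (U :: w₂').take (k + 1 - ds.length) = U :: (w₂'.take (k - ds.length)) := by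
    obtain ⟨j, hj⟩ : ∃ j, k + 1 - ds.length = j + 1 := ⟨k - ds.length, by omega⟩
    rw [hj, List.take_succ_cons]
    congr 1
    congr 1
    omega
  rw [h2] at h1
  have : U ∈ List.replicate k D ++ [L] := by
    rw [h1]
    exact List.mem_append.2 (Or.inr (by simp))
  simp [List.mem_replicate] at this

lemma ds_decomp {k : ℕ} {ds rest : List Step} (h : (List.replicate k D ++ [L]) <+: ds)
    (hlen : ds.length = k + 1 + rest.length) (hrest : rest = ds.drop (k+1)) :
    ds = (List.replicate k D ++ [L]) ++ rest := by
  have h1 : List.replicate k D ++ [L] = ds.take (k+1) := by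
    have := List.prefix_iff_eq_take.1 h
    rwa [tf_length] at this
  rw [h1, hrest, List.take_append_drop]

/-! the lower bound lemma -/

lemma LB {k : ℕ} (hk : 1 ≤ k) : ∀ N (w : List Step), w.length ≤ N →
    ¬ [U, L] <:+: w → ¬ [L, U] <:+: w →
    (k+2) * numOccurrences (boxFactor k) w ≤ countD w + countL w +
      (if (List.replicate k D ++ [L]) <:+ w then 1 else 0) := by
  intro N
  induction N with
  | zero =>
    intro w hw _ _
    have : w = [] := List.length_eq_zero_iff.1 (by omega)
    subst this
    simp [numOcc_nil (k := k)]
  | succ N ih =>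
    intro w hwlen hUL hLU
    obtain ⟨p, ds, w₂, rfl, hds, hde, hw₂⟩ := parse w
    rcases eq_or_ne ds [] with rfl | hdsne
    · -- ds empty: w = replicate p U, w₂ = []
      rw [hde rfl]
      have hnp : ¬ ((List.replicate k D ++ [L]) <+: (([] : List Step) ++ ([] : List Step))) := by
        intro h
        have := h.length_le
        simp only [List.length_append, List.length_replicate, List.length_cons,
          List.length_nil] at this
        omega
      rw [numOcc_Urun hk]
      simp [hnp, numOcc_nil (k := k)]
    · have hdslen : 1 ≤ ds.length := List.length_pos_iff.2 hdsne
      rw [numOcc_Urun hk, numOcc_downs ds w₂ hds]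
      have hsuffix : w₂ <:+ List.replicate p U ++ (ds ++ w₂) := ⟨List.replicate p U ++ ds, by simp⟩
      have hw₂len : w₂.length ≤ N := by
        have h2 := hwlen
        simp only [List.length_append, List.length_replicate] at h2
        omega
      have ih₂ := ih w₂ hw₂len
        (fun h => hUL (h.trans hsuffix.isInfix)) (fun h => hLU (h.trans hsuffix.isInfix))
      have hdn : countD ds + countL ds = ds.length := dn_downs hds
      have he₂le : (if (List.replicate k D ++ [L]) <:+ w₂ then 1 else 0) ≤ 1 := by
        split <;> omega
      by_cases hb : p ≠ 0 ∧ (List.replicate k D ++ [L]) <+: ds ++ w₂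
      · rw [if_pos hb]
        rcases hw₂ with rfl | ⟨w₂', rfl⟩
        · -- w₂ empty
          rw [numOcc_nil (k := k)]
          have htfds : (List.replicate k D ++ [L]) <+: ds := by
            have := hb.2
            rwa [List.append_nil] at this
          have hdsk : k + 1 ≤ ds.length := by
            have := htfds.length_le
            rwa [tf_length] at this
          rcases Nat.lt_or_ge (ds.length) (k+2) with hlen | hlen
          · have hdseq : ds = List.replicate k D ++ [L] := by
              have h1 := List.prefix_iff_eq_take.1 htfds
              rw [tf_length] at h1
              rw [h1, List.take_of_length_le (by omega)]
            have hsuf : (List.replicate k D ++ [L]) <:+ (List.replicate p U ++ (ds ++ ([] : List Step))) := by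
              rw [hdseq]
              exact ⟨List.replicate p U, by simp⟩
            rw [if_pos hsuf]
            simp only [countD_append, countL_append, countD_repU, countL_repU, countD_nil,
              countL_nil]
            omega
          · simp only [countD_append, countL_append, countD_repU, countL_repU, countD_nil,
              countL_nil]
            split <;> omega
        · -- w₂ = U :: w₂'
          have hdsk : k + 1 ≤ ds.length := dsU_len hb.2
          have hdsk2 : k + 2 ≤ ds.length := by
            rcases Nat.lt_or_ge (ds.length) (k+2) with hlen | hlen
            · exfalso
              have htfds : (List.replicate k D ++ [L]) <+: ds :=
                prefix_of_prefix_append hb.2 (by rw [tf_length]; omega)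
              have hdseq : ds = List.replicate k D ++ [L] := by
                have h1 := List.prefix_iff_eq_take.1 htfds
                rw [tf_length] at h1
                rw [h1, List.take_of_length_le (by omega)]
              apply hLU
              refine ⟨List.replicate p U ++ List.replicate k D, w₂', ?_⟩
              rw [hdseq]
              simp
            · exact hlen
          have goal2 : k + 2 + (if (List.replicate k D ++ [L]) <:+ (U :: w₂') then 1 else 0) ≤ ds.length +
              (if (List.replicate k D ++ [L]) <:+ (List.replicate p U ++ (ds ++ (U :: w₂'))) then 1 else 0) := by
            by_cases h1 : (List.replicate k D ++ [L]) <:+ (U :: w₂')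
            · rw [if_pos h1, if_pos (h1.trans hsuffix)]
              omega
            · rw [if_neg h1]
              split <;> omega
          simp only [countD_append, countL_append, countD_repU, countL_repU]
          have expand : (k+2) * (1 + numOccurrences (boxFactor k) (U :: w₂')) =
              (k+2) + (k+2) * numOccurrences (boxFactor k) (U :: w₂') := by ring
          rw [expand]
          omega
      · rw [if_neg hb]
        simp only [countD_append, countL_append, countD_repU, countL_repU, Nat.zero_add]
        split <;> omega

lemma shape {k : ℕ} (hk : 1 ≤ k) : ∀ N (m : ℕ) (w : List Step), 1 ≤ m → w.length ≤ N →
    ¬ [U, L] <:+: w → ¬ [L, U] <:+: w →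
    countD w + countL w + 1 = (k+2) * m →
    numOccurrences (boxFactor k) w = m →
    ∃ c, c.length = m ∧ (∀ a ∈ c, 1 ≤ a) ∧ w = boxForm k c := by
  intro N
  induction N with
  | zero =>
    intro m w hm hw _ _ hdn _
    have : w = [] := List.length_eq_zero_iff.1 (by omega)
    subst this
    simp only [countD_nil, countL_nil] at hdn
    nlinarith
  | succ N ih =>
    intro m w hm hwlen hUL hLU hdn hocc
    obtain ⟨p, ds, w₂, rfl, hds, hde, hw₂⟩ := parse w
    rcases eq_or_ne ds [] with rfl | hdsne
    · exfalso
      rw [hde rfl] at hocc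
      have hnp : ¬ ((List.replicate k D ++ [L]) <+: (([] : List Step) ++ ([] : List Step))) := by
        intro h
        have := h.length_le
        simp only [List.length_append, List.length_replicate, List.length_cons,
          List.length_nil] at this
        omega
      rw [numOcc_Urun hk] at hocc
      simp [hnp, numOcc_nil (k := k)] at hocc
      omega
    · have hdslen : 1 ≤ ds.length := List.length_pos_iff.2 hdsne
      rw [numOcc_Urun hk, numOcc_downs ds w₂ hds] at hocc
      have hsuffix : w₂ <:+ List.replicate p U ++ (ds ++ w₂) := ⟨List.replicate p U ++ ds, by simp⟩
      have hw₂len : w₂.length ≤ N := by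
        have h2 := hwlen
        simp only [List.length_append, List.length_replicate] at h2
        omega
      have hw₂UL : ¬ [U, L] <:+: w₂ := fun h => hUL (h.trans hsuffix.isInfix)
      have hw₂LU : ¬ [L, U] <:+: w₂ := fun h => hLU (h.trans hsuffix.isInfix)
      have ih₂ := LB hk N w₂ hw₂len hw₂UL hw₂LU
      have hdnds : countD ds + countL ds = ds.length := dn_downs hds
      have he₂le : (if (List.replicate k D ++ [L]) <:+ w₂ then 1 else 0) ≤ 1 := by
        split <;> omega
      simp only [countD_append, countL_append, countD_repU, countL_repU] at hdn
      by_cases hb : p ≠ 0 ∧ (List.replicate k D ++ [L]) <+: ds ++ w₂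
      · rw [if_pos hb] at hocc
        rcases hw₂ with rfl | ⟨w₂', rfl⟩
        · -- w₂ empty: m = 1 case
          rw [numOcc_nil (k := k)] at hocc
          have hm1 : m = 1 := by omega
          subst hm1
          have htfds : (List.replicate k D ++ [L]) <+: ds := by
            have := hb.2
            rwa [List.append_nil] at this
          have hdsk : k + 1 ≤ ds.length := by
            have := htfds.length_le
            rwa [tf_length] at this
          have hdslen2 : ds.length = k + 1 := by
            simp only [countD_nil, countL_nil] at hdn
            omega
          have hdseq : ds = List.replicate k D ++ [L] := by
            have h1 := List.prefix_iff_eq_take.1 htfds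
            rw [tf_length] at h1
            rw [h1, List.take_of_length_le (by omega)]
          refine ⟨[p], by simp, by intro a ha; rw [List.mem_singleton] at ha; subst ha; have := hb.1; omega, ?_⟩
          rw [hdseq]
          simp [boxForm, List.append_assoc]
        · -- w₂ = U :: w₂'
          have hdsk : k + 1 ≤ ds.length := dsU_len hb.2
          have hdsk2 : k + 2 ≤ ds.length := by
            rcases Nat.lt_or_ge (ds.length) (k+2) with hlen | hlen
            · exfalso
              have htfds : (List.replicate k D ++ [L]) <+: ds :=
                prefix_of_prefix_append hb.2 (by rw [tf_length]; omega)
              have hdseq : ds = List.replicate k D ++ [L] := by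
                have h1 := List.prefix_iff_eq_take.1 htfds
                rw [tf_length] at h1
                rw [h1, List.take_of_length_le (by omega)]
              apply hLU
              refine ⟨List.replicate p U ++ List.replicate k D, w₂', ?_⟩
              rw [hdseq]
              simp
            · exact hlen
          -- occurrence count of w₂ is m - 1 ≥ 1
          have hoccw₂ : numOccurrences (boxFactor k) (U :: w₂') + 1 = m := by omega
          have hoccval : numOccurrences (boxFactor k) (U :: w₂') = m - 1 := by omega
          rw [hoccval] at ih₂
          have hdsexact : ds.length = k + 2 := by
            -- from LB on w₂
            by_contra hne
            have h3 : k + 3 ≤ ds.length := by omega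
            -- dn w₂ + ds.length + 1 = (k+2)*m
            have h4 : (k+2) * (m-1) ≤ countD (U :: w₂') + countL (U :: w₂') + 1 := by omega
            have h5 : (k+2) * (m-1) + (k+2) = (k+2)*m := by
              have : m - 1 + 1 = m := by omega
              calc (k+2) * (m-1) + (k+2) = (k+2) * ((m-1)+1) := by ring
              _ = (k+2) * m := by rw [this]
            omega
          -- m ≥ 2
          have hm2 : 2 ≤ m := by
            by_contra hc
            have : m = 1 := by omega
            subst this
            omega
          -- ds = tf ++ [x], x = D
          have htfds : (List.replicate k D ++ [L]) <+: ds :=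
            prefix_of_prefix_append hb.2 (by rw [tf_length]; omega)
          have hrest : ds = (List.replicate k D ++ [L]) ++ ds.drop (k+1) := by
            have h1 := List.prefix_iff_eq_take.1 htfds
            rw [tf_length] at h1
            conv_lhs => rw [← List.take_append_drop (k+1) ds]
            rw [← h1]
          have hdroplen : (ds.drop (k+1)).length = 1 := by
            rw [List.length_drop]
            omega
          obtain ⟨x, hx⟩ := List.length_eq_one_iff.1 hdroplen
          have hxmem : x ∈ ds := by
            rw [hrest, hx]
            simp
          have hxD : x = D := by
            cases x with
            | U => exact absurd rfl (hds U hxmem)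
            | D => rfl
            | L =>
              exfalso
              apply hLU
              refine ⟨List.replicate p U ++ (List.replicate k D ++ [L]), w₂', ?_⟩
              conv_rhs => rw [hrest, hx]
              simp
          -- apply IH to w₂
          have hdnw₂ : countD (U :: w₂') + countL (U :: w₂') + 1 = (k+2) * (m-1) := by
            have h5 : (k+2) * (m-1) + (k+2) = (k+2)*m := by
              have hmm : m - 1 + 1 = m := by omega
              calc (k+2) * (m-1) + (k+2) = (k+2) * ((m-1)+1) := by ring
              _ = (k+2) * m := by rw [hmm]
            omega
          obtain ⟨c', hc'len, hc'pos, hc'eq⟩ := ih (m-1) (U :: w₂') (by omega) hw₂len hw₂UL hw₂LU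
            hdnw₂ (by omega)
          have hc'ne : c' ≠ [] := by
            intro h
            rw [h] at hc'len
            simp at hc'len
            omega
          obtain ⟨b', r', rfl⟩ : ∃ b' r', c' = b' :: r' := by
            cases c' with
            | nil => exact absurd rfl hc'ne
            | cons b r => exact ⟨b, r, rfl⟩
          refine ⟨p :: b' :: r', by simp only [List.length_cons] at hc'len ⊢; omega, ?_, ?_⟩
          · intro a ha
            rcases List.mem_cons.1 ha with rfl | ha
            · omega
            · exact hc'pos a ha
          · show List.replicate p U ++ (ds ++ (U :: w₂')) = boxForm k (p :: b' :: r')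
            rw [boxForm, ← hc'eq, hrest, hx, hxD]
            simp [List.append_assoc]
      · -- no occurrence at first run: contradiction
        exfalso
        rw [if_neg hb, Nat.zero_add] at hocc
        rw [hocc] at ih₂
        omega

/-! composition level -/

def Valid (k : ℕ) : ℕ → List ℕ → Prop
  | _, [] => False
  | h, [a] => 1 ≤ a ∧ h + a = k + 1
  | h, a :: b :: r => 1 ≤ a ∧ k + 2 ≤ h + a ∧ Valid k (h + a - (k+2)) (b :: r)

def zcount (k : ℕ) : ℕ → List ℕ → ℕ
  | _, [] => 0
  | _, [_] => 0
  | h, a :: b :: r => (if h + a = k + 2 then 1 else 0) + zcount k (h + a - (k+2)) (b :: r)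

def go (k : ℕ) : ℕ → List ℕ → List ℕ
  | _, [] => []
  | h, a :: r => if h = 0 then (a - 1) :: r else a :: go k (h + a - (k+2)) r

def bump (k : ℕ) : List ℕ → List ℕ
  | [] => []
  | a :: r => (a + 1) :: go k (a - (k+2)) r

lemma Valid_ne_nil {k h c} (hv : Valid k h c) : c ≠ [] := by
  cases c with
  | nil => exact absurd hv (by simp [Valid])
  | cons a r => simp

lemma Valid_pos {k h c} (hv : Valid k h c) : ∀ a ∈ c, 1 ≤ a := by
  induction c generalizing h with
  | nil => simp
  | cons a r ih =>
    intro x hx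
    cases r with
    | nil =>
      rcases List.mem_singleton.1 hx with rfl
      exact hv.1
    | cons b r' =>
      rcases List.mem_cons.1 hx with rfl | hx
      · exact hv.1
      · exact ih hv.2.2 x hx

lemma go_length (k : ℕ) : ∀ h c, (go k h c).length = c.length := by
  intro h c
  induction c generalizing h with
  | nil => simp [go]
  | cons a r ih =>
    rw [go]
    split
    · simp
    · simp [ih]

lemma zcount_cons (k h a : ℕ) {r : List ℕ} (hr : r ≠ []) :
    zcount k h (a :: r) = (if h + a = k + 2 then 1 else 0) + zcount k (h + a - (k+2)) r := by
  cases r with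
  | nil => exact absurd rfl hr
  | cons b r' => rfl

lemma Valid_cons (k h a : ℕ) {r : List ℕ} (hr : r ≠ []) :
    Valid k h (a :: r) ↔ (1 ≤ a ∧ k + 2 ≤ h + a ∧ Valid k (h + a - (k+2)) r) := by
  cases r with
  | nil => exact absurd rfl hr
  | cons b r' => exact Iff.rfl

/-- The key preservation lemma for `go`. -/
lemma go_spec {k : ℕ} (hk : 1 ≤ k) : ∀ c h, Valid k h c → (h = 0 ∨ 1 ≤ zcount k h c) →
    Valid k (h+1) (go k h c) ∧
      zcount k (h+1) (go k h c) + (if h = 0 then 0 else 1) = zcount k h c := by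
  intro c
  induction c with
  | nil => intro h hv _; exact absurd hv (by simp [Valid])
  | cons a r ih =>
    intro h hv hz
    cases r with
    | nil =>
      rcases hz with rfl | hz
      · obtain ⟨ha, hsum⟩ := hv
        have ha2 : 2 ≤ a := by omega
        rw [go, if_pos rfl]
        exact ⟨⟨by omega, by omega⟩, by simp [zcount]⟩
      · exact absurd hz (by simp [zcount])
    | cons b r' =>
      obtain ⟨ha, hab, hv'⟩ := hv
      have hrne : (b :: r') ≠ [] := by simp
      by_cases h0 : h = 0
      · subst h0
        rw [go, if_pos rfl]
        have ha2 : 2 ≤ a := by omega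
        refine ⟨⟨by omega, by omega, ?_⟩, ?_⟩
        · have : 0 + 1 + (a - 1) - (k+2) = 0 + a - (k+2) := by omega
          rw [this]
          exact hv'
        · rw [if_pos rfl, Nat.add_zero, zcount_cons k _ _ hrne, zcount_cons k _ _ hrne]
          have e1 : 0 + 1 + (a - 1) = 0 + a := by omega
          rw [e1]
      · rw [go, if_neg h0]
        set h' := h + a - (k+2) with hh'
        have hsplit : h' = 0 ∨ 1 ≤ zcount k h' (b :: r') := by
          rcases Nat.eq_zero_or_pos h' with h'0 | h'pos
          · exact Or.inl h'0
          · right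
            rcases hz with h0' | hz
            · exact absurd h0' h0
            · rw [zcount_cons k _ _ hrne] at hz
              have : ¬ (h + a = k + 2) := by omega
              rw [if_neg this, Nat.zero_add] at hz
              exact hz
        obtain ⟨hgv, hgz⟩ := ih h' hv' hsplit
        have hne : go k h' (b :: r') ≠ [] := by
          have := go_length k h' (b :: r')
          intro hnil
          rw [hnil] at this
          simp at this
        constructor
        · rw [Valid_cons k _ _ hne]
          refine ⟨ha, by omega, ?_⟩
          have e2 : h + 1 + a - (k+2) = h' + 1 := by omega
          rw [e2]
          exact hgv
        · rw [if_neg h0, zcount_cons k _ _ hne, zcount_cons k _ _ hrne]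
          have e2 : h + 1 + a - (k+2) = h' + 1 := by omega
          have e3 : ¬ (h + 1 + a = k + 2) := by omega
          rw [if_neg e3, Nat.zero_add, e2, ← hh']
          by_cases hz0 : h + a = k + 2
          · have hh'0 : h' = 0 := by omega
            rw [if_pos hz0]
            rw [hh'0, if_pos rfl, Nat.add_zero] at hgz
            rw [hh'0]
            omega
          · have hh'pos : h' ≠ 0 := by omega
            rw [if_neg hz0]
            rw [if_neg hh'pos] at hgz
            omega

lemma go_inj {k : ℕ} (hk : 1 ≤ k) : ∀ c c' h, Valid k h c → Valid k h c' →
    (h = 0 ∨ 1 ≤ zcount k h c) → (h = 0 ∨ 1 ≤ zcount k h c') →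
    go k h c = go k h c' → c = c' := by
  intro c
  induction c with
  | nil => intro c' h hv; exact absurd hv (by simp [Valid])
  | cons a r ih =>
    intro c' h hv hv' hz hz' heq
    cases c' with
    | nil => exact absurd hv' (by simp [Valid])
    | cons a' r' =>
      rw [go, go] at heq
      by_cases h0 : h = 0
      · rw [if_pos h0, if_pos h0] at heq
        rw [List.cons.injEq] at heq
        have ha2 : 2 ≤ a := by
          subst h0
          cases r with
          | nil => have := hv.2; omega
          | cons b rr => have := hv.2.1; omega
        have ha2' : 2 ≤ a' := by
          subst h0
          cases r' with
          | nil => have := hv'.2; omega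
          | cons b rr => have := hv'.2.1; omega
        have : a = a' := by omega
        rw [this, heq.2]
      · rw [if_neg h0, if_neg h0] at heq
        rw [List.cons.injEq] at heq
        obtain ⟨rfl, h2⟩ := heq
        cases r with
        | nil =>
          rcases hz with h0' | hz
          · exact absurd h0' h0
          · exact absurd hz (by simp [zcount])
        | cons b rr =>
          cases r' with
          | nil =>
            rcases hz' with h0' | hz'
            · exact absurd h0' h0
            · exact absurd hz' (by simp [zcount])
          | cons b' rr' =>
            obtain ⟨-, hab, hvr⟩ := hv
            obtain ⟨-, -, hvr'⟩ := hv'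
            have hrne : (b :: rr) ≠ [] := by simp
            have hrne' : (b' :: rr') ≠ [] := by simp
            have hzr : h + a - (k+2) = 0 ∨ 1 ≤ zcount k (h + a - (k+2)) (b :: rr) := by
              rcases Nat.eq_zero_or_pos (h + a - (k+2)) with hh | hh
              · exact Or.inl hh
              · right
                rcases hz with h0' | hz
                · exact absurd h0' h0
                · rw [zcount_cons k _ _ hrne] at hz
                  have : ¬ (h + a = k + 2) := by omega
                  rw [if_neg this, Nat.zero_add] at hz
                  exact hz
            have hzr' : h + a - (k+2) = 0 ∨ 1 ≤ zcount k (h + a - (k+2)) (b' :: rr') := by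
              rcases Nat.eq_zero_or_pos (h + a - (k+2)) with hh | hh
              · exact Or.inl hh
              · right
                rcases hz' with h0' | hz'
                · exact absurd h0' h0
                · rw [zcount_cons k _ _ hrne'] at hz'
                  have : ¬ (h + a = k + 2) := by omega
                  rw [if_neg this, Nat.zero_add] at hz'
                  exact hz'
            rw [ih (b' :: rr') (h + a - (k+2)) hvr hvr' hzr hzr' h2]

/-- The bump map: well-definedness. -/
lemma bump_spec {k : ℕ} (hk : 1 ≤ k) {c : List ℕ} (hv : Valid k 0 c)
    (hz : 1 ≤ zcount k 0 c) :
    Valid k 0 (bump k c) ∧ zcount k 0 (bump k c) + 1 = zcount k 0 c ∧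
      (bump k c).length = c.length := by
  cases c with
  | nil => exact absurd hv (by simp [Valid])
  | cons a r =>
    cases r with
    | nil => exact absurd hz (by simp [zcount])
    | cons b r' =>
      obtain ⟨ha, hab, hv'⟩ := hv
      have hrne : (b :: r') ≠ [] := by simp
      rw [zcount_cons k _ _ hrne] at hz
      have hsplit : 0 + a - (k+2) = 0 ∨ 1 ≤ zcount k (0 + a - (k+2)) (b :: r') := by
        by_cases hc : 0 + a = k + 2
        · left; omega
        · right; rw [if_neg hc, Nat.zero_add] at hz; exact hz
      obtain ⟨hgv, hgz⟩ := go_spec hk (b :: r') (0 + a - (k+2)) hv' hsplit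
      have hne : go k (0 + a - (k+2)) (b :: r') ≠ [] := by
        have := go_length k (0 + a - (k+2)) (b :: r')
        intro hnil
        rw [hnil] at this
        simp at this
      have hb0 : bump k (a :: b :: r') = (a + 1) :: go k (0 + a - (k+2)) (b :: r') := by
        rw [bump]
        have e0 : a - (k+2) = 0 + a - (k+2) := by omega
        rw [e0]
      rw [hb0]
      have e1 : 0 + (a + 1) - (k + 2) = (0 + a - (k+2)) + 1 := by omega
      refine ⟨?_, ?_, ?_⟩
      · rw [Valid_cons k _ _ hne]
        refine ⟨by omega, by omega, ?_⟩
        rw [e1]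
        exact hgv
      · rw [zcount_cons k _ _ hne]
        have e2 : ¬ (0 + (a+1) = k + 2) := by omega
        rw [if_neg e2, Nat.zero_add, e1]
        by_cases hc : 0 + a = k + 2
        · have h0 : 0 + a - (k+2) = 0 := by omega
          rw [h0] at hgz ⊢
          rw [if_pos rfl, Nat.add_zero] at hgz
          rw [if_pos hc] at hz
          rw [zcount_cons k _ _ hrne, if_pos hc, h0]
          omega
        · have h0 : 0 + a - (k+2) ≠ 0 := by omega
          rw [if_neg h0] at hgz
          rw [if_neg hc] at hz
          rw [zcount_cons k _ _ hrne, if_neg hc]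
          omega
      · have := go_length k (0 + a - (k+2)) (b :: r')
        simp only [List.length_cons, this]

lemma bump_inj {k : ℕ} (hk : 1 ≤ k) {c c' : List ℕ} (hv : Valid k 0 c) (hv' : Valid k 0 c')
    (hz : 1 ≤ zcount k 0 c) (hz' : 1 ≤ zcount k 0 c')
    (heq : bump k c = bump k c') : c = c' := by
  cases c with
  | nil => exact absurd hv (by simp [Valid])
  | cons a r =>
    cases c' with
    | nil => exact absurd hv' (by simp [Valid])
    | cons a' r' =>
      cases r with
      | nil => exact absurd hz (by simp [zcount])
      | cons b rr =>
        cases r' with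
        | nil => exact absurd hz' (by simp [zcount])
        | cons b' rr' =>
          rw [bump, bump, List.cons.injEq] at heq
          have haa : a = a' := by omega
          subst haa
          obtain ⟨hva, hab, hvr⟩ := hv
          obtain ⟨-, -, hvr'⟩ := hv'
          have hrne : (b :: rr) ≠ [] := by simp
          have hrne' : (b' :: rr') ≠ [] := by simp
          rw [zcount_cons k _ _ hrne] at hz
          rw [zcount_cons k _ _ hrne'] at hz'
          have e0 : a - (k+2) = 0 + a - (k+2) := by omega
          have hzr : 0 + a - (k+2) = 0 ∨ 1 ≤ zcount k (0 + a - (k+2)) (b :: rr) := by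
            by_cases hc : 0 + a = k + 2
            · left; omega
            · right; rw [if_neg hc, Nat.zero_add] at hz; exact hz
          have hzr' : 0 + a - (k+2) = 0 ∨ 1 ≤ zcount k (0 + a - (k+2)) (b' :: rr') := by
            by_cases hc : 0 + a = k + 2
            · left; omega
            · right; rw [if_neg hc, Nat.zero_add] at hz'; exact hz'
          have h2 := heq.2
          rw [e0] at h2
          rw [go_inj hk (b :: rr) (b' :: rr') (0 + a - (k+2)) hvr hvr' hzr hzr' h2]

/-! boxForm counts -/

lemma counts_boxForm {k : ℕ} : ∀ c : List ℕ, c ≠ [] →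
    countU (boxForm k c) = c.sum ∧
    countD (boxForm k c) + countL (boxForm k c) + 1 = (k+2) * c.length := by
  intro c
  induction c with
  | nil => intro h; exact absurd rfl h
  | cons a r ih =>
    intro _
    cases r with
    | nil =>
      rw [boxForm]
      constructor
      · simp
      · simp only [List.append_assoc, countD_append, countL_append, countD_repU, countL_repU,
          countD_repD, countL_repD, List.length_singleton]
        have : countD [L] = 0 ∧ countL [L] = 1 := ⟨rfl, rfl⟩
        omega
    | cons b r' =>
      obtain ⟨ih1, ih2⟩ := ih (by simp)
      rw [boxForm]
      constructor
      · simp [ih1]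
      · simp only [countD_append, countL_append, countD_repU, countL_repU, countD_repD,
          countL_repD]
        have h5 : countD [L, D] = 1 ∧ countL [L, D] = 1 := ⟨rfl, rfl⟩
        simp only [List.length_cons] at ih2 ⊢
        have hexp : (k+2) * (r'.length + 1 + 1) = (k+2) * (r'.length + 1) + (k+2) := by ring
        omega

lemma Valid_sum {k : ℕ} : ∀ (c : List ℕ) h, Valid k h c → h + c.sum + 1 = (k+2) * c.length := by
  intro c
  induction c with
  | nil => intro h hv; exact absurd hv (by simp [Valid])
  | cons a r ih =>
    intro h hv
    cases r with
    | nil =>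
      obtain ⟨-, h2⟩ := hv
      simp only [List.sum_cons, List.sum_nil, List.length_cons, List.length_nil]
      omega
    | cons b r' =>
      obtain ⟨-, hab, hv'⟩ := hv
      have := ih (h + a - (k+2)) hv'
      simp only [List.sum_cons, List.length_cons] at this ⊢
      have hexp : (k+2) * (b :: r').length = (k + 2) * ((b::r').length + 1) - (k+2) := by
        simp only [List.length_cons]
        ring_nf
        omega
      simp only [List.length_cons] at hexp
      omega

/-! no UL / LU factors in boxForm -/

lemma singleton_prefix_iff {y : Step} {w : List Step} : [y] <+: w ↔ w.head? = some y := by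
  cases w with
  | nil => simp
  | cons c w => simp [List.cons_prefix_cons, eq_comm]

lemma noinfix2_cons {x y c : Step} {w : List Step} :
    ¬([x, y] <:+: (c :: w)) ↔ ¬(x = c ∧ w.head? = some y) ∧ ¬([x, y] <:+: w) := by
  rw [List.infix_cons_iff, List.cons_prefix_cons, singleton_prefix_iff]
  tauto

lemma noinfix2_rep {x y u : Step} {w : List Step} (m : ℕ)
    (h1 : ¬([x, y] <:+: w)) (h2 : ¬(x = u ∧ y = u)) (h3 : ¬(x = u ∧ w.head? = some y)) :
    ¬([x, y] <:+: (List.replicate m u ++ w)) := by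
  induction m with
  | zero => simpa using h1
  | succ m ih =>
    rw [List.replicate_succ, List.cons_append, noinfix2_cons]
    refine ⟨?_, ih⟩
    cases m with
    | zero => simpa using h3
    | succ m' =>
      rintro ⟨rfl, hh⟩
      rw [List.replicate_succ, List.cons_append] at hh
      simp only [List.head?_cons, Option.some.injEq] at hh
      exact h2 ⟨rfl, hh.symm⟩

lemma noinfix2_L {x y : Step} (h : ¬(x = L ∧ y = L) ∨ True) : ¬([x, y] <:+: ([L] : List Step)) := by
  intro hc
  have := hc.length_le
  simp at this

lemma boxForm_noUL {k : ℕ} (hk : 1 ≤ k) : ∀ c : List ℕ, ¬([U, L] <:+: boxForm k c) := by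
  intro c
  induction c with
  | nil =>
    intro h
    have := h.length_le
    simp [boxForm] at this
  | cons a r ih =>
    cases r with
    | nil =>
      rw [boxForm, List.append_assoc]
      apply noinfix2_rep
      · apply noinfix2_rep
        · exact noinfix2_L (Or.inr trivial)
        · simp
        · simp
      · simp
      · rintro ⟨-, hh⟩
        rw [tf_cons hk] at hh
        simp at hh
    | cons b r' =>
      rw [boxForm, List.append_assoc, List.append_assoc]
      apply noinfix2_rep
      · apply noinfix2_rep
        · rw [show ([L, D] : List Step) ++ boxForm k (b :: r') = L :: (D :: boxForm k (b :: r')) by rfl]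
          rw [noinfix2_cons]
          refine ⟨by simp, ?_⟩
          rw [noinfix2_cons]
          refine ⟨?_, ih⟩
          rintro ⟨h, -⟩
          exact absurd h (by simp)
        · simp
        · simp
      · simp
      · rintro ⟨-, hh⟩
        obtain ⟨k', rfl⟩ : ∃ k', k = k' + 1 := ⟨k - 1, by omega⟩
        rw [List.replicate_succ, List.cons_append, List.head?_cons] at hh
        exact absurd hh (by simp)

lemma boxForm_noLU {k : ℕ} (hk : 1 ≤ k) : ∀ c : List ℕ, ¬([L, U] <:+: boxForm k c) := by
  intro c
  induction c with
  | nil =>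
    intro h
    have := h.length_le
    simp [boxForm] at this
  | cons a r ih =>
    cases r with
    | nil =>
      rw [boxForm, List.append_assoc]
      apply noinfix2_rep
      · apply noinfix2_rep
        · exact noinfix2_L (Or.inr trivial)
        · simp
        · rintro ⟨h, -⟩
          exact absurd h (by simp)
      · simp
      · rintro ⟨h, -⟩
        exact absurd h (by simp)
    | cons b r' =>
      rw [boxForm, List.append_assoc, List.append_assoc]
      apply noinfix2_rep
      · apply noinfix2_rep
        · rw [show ([L, D] : List Step) ++ boxForm k (b :: r') = L :: (D :: boxForm k (b :: r')) by rfl]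
          rw [noinfix2_cons]
          refine ⟨?_, ?_⟩
          · rintro ⟨-, hh⟩
            simp at hh
          · rw [noinfix2_cons]
            refine ⟨by simp, ih⟩
        · simp
        · rintro ⟨h, -⟩
          exact absurd h (by simp)
      · simp
      · rintro ⟨h, -⟩
        exact absurd h (by simp)

/-! prefix conditions for boxForm -/

lemma prefix_append_cases {α : Type*} {p x y : List α} (h : p <+: x ++ y) :
    p <+: x ∨ ∃ q, p = x ++ q ∧ q <+: y := by
  rcases le_or_gt p.length x.length with hle | hlt
  · left
    have h1 := List.prefix_iff_eq_take.1 h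
    rw [List.take_append_of_le_length hle] at h1
    rw [h1]
    exact List.take_prefix _ _
  · right
    obtain ⟨t, ht⟩ := h
    have h2 : p.take x.length = x := by
      have h3 : (p ++ t).take x.length = p.take x.length :=
        List.take_append_of_le_length (by omega)
      rw [ht] at h3
      rw [← h3, List.take_left]
    refine ⟨p.drop x.length, ?_, ?_⟩
    · conv_lhs => rw [← List.take_append_drop x.length p]
      rw [h2]
    · have h4 : (p ++ t).drop x.length = p.drop x.length ++ t :=
        List.drop_append_of_le_length (by omega)
      rw [ht, List.drop_left] at h4
      exact ⟨t, h4.symm⟩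

lemma prefix_replicate {α : Type*} {p : List α} {m : ℕ} {u : α} (h : p <+: List.replicate m u) :
    p = List.replicate p.length u := by
  rw [List.eq_replicate_iff]
  exact ⟨rfl, fun b hb => List.eq_of_mem_replicate (h.subset hb)⟩

lemma prefix_singleton_cases {x : Step} {q : List Step} (h : q <+: [x]) : q = [] ∨ q = [x] := by
  cases q with
  | nil => exact Or.inl rfl
  | cons c q' =>
    rw [List.cons_prefix_cons] at h
    obtain ⟨rfl, h2⟩ := h
    rw [List.prefix_nil] at h2
    exact Or.inr (by rw [h2])

lemma prefix_pair_cases {x y : Step} {q : List Step} (h : q <+: [x, y]) :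
    q = [] ∨ q = [x] ∨ q = [x, y] := by
  cases q with
  | nil => exact Or.inl rfl
  | cons c q' =>
    rw [List.cons_prefix_cons] at h
    obtain ⟨rfl, h2⟩ := h
    rcases prefix_singleton_cases h2 with rfl | rfl
    · exact Or.inr (Or.inl rfl)
    · exact Or.inr (Or.inr rfl)

lemma boxForm_prefix {k : ℕ} : ∀ (c : List ℕ) h, Valid k h c →
    ∀ p, p <+: boxForm k c → countD p + countL p ≤ countU p + h := by
  intro c
  induction c with
  | nil => intro h hv; exact absurd hv (by simp [Valid])
  | cons a r ih =>
    intro h hv p hp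
    cases r with
    | nil =>
      obtain ⟨ha, hsum⟩ := hv
      rw [boxForm, List.append_assoc] at hp
      rcases prefix_append_cases hp with h1 | ⟨q, rfl, hq⟩
      · rw [prefix_replicate h1]
        simp
      · rcases prefix_append_cases hq with h2 | ⟨q', rfl, hq'⟩
        · have := h2.length_le
          rw [prefix_replicate h2]
          simp only [countD_append, countL_append, countU_append, countD_repU, countL_repU,
            countU_repU, countD_repD, countL_repD, countU_repD]
          simp only [List.length_replicate] at this
          omega
        · rcases prefix_singleton_cases hq' with rfl | rfl
          · simp only [List.append_nil, countD_append, countL_append, countU_append,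
              countD_repU, countL_repU, countU_repU, countD_repD, countL_repD, countU_repD]
            omega
          · simp only [countD_append, countL_append, countU_append, countD_repU, countL_repU,
              countU_repU, countD_repD, countL_repD, countU_repD]
            have : countD [L] + countL [L] = 1 ∧ countU [L] = 0 := by constructor <;> rfl
            omega
    | cons b r' =>
      obtain ⟨ha, hab, hv'⟩ := hv
      rw [boxForm, List.append_assoc, List.append_assoc] at hp
      rcases prefix_append_cases hp with h1 | ⟨q, rfl, hq⟩
      · rw [prefix_replicate h1]
        simp
      · rcases prefix_append_cases hq with h2 | ⟨q', rfl, hq'⟩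
        · have := h2.length_le
          rw [prefix_replicate h2]
          simp only [countD_append, countL_append, countU_append, countD_repU, countL_repU,
            countU_repU, countD_repD, countL_repD, countU_repD]
          simp only [List.length_replicate] at this
          omega
        · rcases prefix_append_cases hq' with h3 | ⟨q'', rfl, hq''⟩
          · have hcases := prefix_pair_cases h3
            rcases hcases with rfl | rfl | rfl
            · simp only [List.append_nil, countD_append, countL_append, countU_append,
                countD_repU, countL_repU, countU_repU, countD_repD, countL_repD, countU_repD]
              omega
            · simp only [countD_append, countL_append, countU_append, countD_repU, countL_repU,
                countU_repU, countD_repD, countL_repD, countU_repD]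
              have : countD [L] + countL [L] = 1 ∧ countU [L] = 0 := by constructor <;> rfl
              omega
            · simp only [countD_append, countL_append, countU_append, countD_repU, countL_repU,
                countU_repU, countD_repD, countL_repD, countU_repD]
              have : countD [L, D] + countL [L, D] = 2 ∧ countU [L, D] = 0 := by
                constructor <;> rfl
              omega
          · have := ih (h + a - (k+2)) hv' q'' hq''
            simp only [countD_append, countL_append, countU_append, countD_repU, countL_repU,
              countU_repU, countD_repD, countL_repD, countU_repD]
            have h4 : countD [L, D] + countL [L, D] = 2 ∧ countU [L, D] = 0 := by
              constructor <;> rfl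
            omega

/-! occurrences of boxFactor in boxForm -/

lemma occ_boxForm {k : ℕ} (hk : 1 ≤ k) : ∀ c : List ℕ, c ≠ [] → (∀ a ∈ c, 1 ≤ a) →
    numOccurrences (boxFactor k) (boxForm k c) = c.length := by
  intro c
  induction c with
  | nil => intro h; exact absurd rfl h
  | cons a r ih =>
    intro _ hpos
    cases r with
    | nil =>
      rw [boxForm, List.append_assoc, numOcc_Urun hk]
      have h1 : (List.replicate k D ++ [L]) <+: (List.replicate k D ++ [L]) := List.prefix_refl _
      have h2 : a ≠ 0 := by have := hpos a (by simp); omega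
      rw [if_pos ⟨h2, h1⟩]
      have h3 : ∀ x ∈ (List.replicate k D ++ [L] : List Step), x ≠ U := by
        intro x hx
        rcases List.mem_append.1 hx with hx | hx
        · rw [List.eq_of_mem_replicate hx]; simp
        · rw [List.mem_singleton.1 hx]; simp
      have h4 := numOcc_downs (k := k) (List.replicate k D ++ [L]) [] h3
      rw [List.append_nil] at h4
      rw [h4, numOcc_nil]
      simp
    | cons b r' =>
      rw [boxForm, List.append_assoc, List.append_assoc, numOcc_Urun hk]
      have h1 : (List.replicate k D ++ [L]) <+:
          (List.replicate k D ++ ([L, D] ++ boxForm k (b :: r'))) := by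
        rw [show ([L, D] : List Step) ++ boxForm k (b :: r') = [L] ++ ([D] ++ boxForm k (b :: r')) by rfl]
        rw [← List.append_assoc]
        exact ⟨[D] ++ boxForm k (b :: r'), rfl⟩
      have h2 : a ≠ 0 := by have := hpos a (by simp); omega
      rw [if_pos ⟨h2, h1⟩]
      have h3 : ∀ x ∈ (List.replicate k D ++ [L, D] : List Step), x ≠ U := by
        intro x hx
        rcases List.mem_append.1 hx with hx | hx
        · rw [List.eq_of_mem_replicate hx]; simp
        · have hx2 : x = L ∨ x = D := by simpa using hx
          rcases hx2 with rfl | rfl <;> simp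
      have h4 := numOcc_downs (k := k) (List.replicate k D ++ [L, D]) (boxForm k (b :: r')) h3
      rw [← List.append_assoc, h4, ih (by simp) (fun x hx => hpos x (by simp [hx]))]
      simp only [List.length_cons]
      omega

/-! Valid transfer: from skew conditions on boxForm to Valid -/

lemma Valid_transfer {k : ℕ} : ∀ (c : List ℕ) h, c ≠ [] → (∀ a ∈ c, 1 ≤ a) →
    (∀ p, p <+: boxForm k c → countD p + countL p ≤ countU p + h) →
    (countU (boxForm k c) + h = countD (boxForm k c) + countL (boxForm k c)) →
    Valid k h c := by
  intro c
  induction c with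
  | nil => intro h hne; exact absurd rfl hne
  | cons a r ih =>
    intro h _ hpos hpre hbal
    cases r with
    | nil =>
      refine ⟨hpos a (by simp), ?_⟩
      rw [boxForm] at hbal
      simp only [countU_append, countD_append, countL_append, countU_repU, countD_repU,
        countL_repU, countU_repD, countD_repD, countL_repD] at hbal
      have : countU [L] = 0 ∧ countD [L] = 0 ∧ countL [L] = 1 := by
        refine ⟨rfl, rfl, rfl⟩
      omega
    | cons b r' =>
      have hk2 : k + 2 ≤ h + a := by
        have := hpre (List.replicate a U ++ (List.replicate k D ++ [L, D]))
          (by rw [boxForm, List.append_assoc, List.append_assoc]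
              exact ⟨boxForm k (b :: r'), by simp⟩)
        simp only [countD_append, countL_append, countU_append, countD_repU, countL_repU,
          countU_repU, countD_repD, countL_repD, countU_repD] at this
        have h4 : countD [L, D] + countL [L, D] = 2 ∧ countU [L, D] = 0 := by
          constructor <;> rfl
        omega
      refine ⟨hpos a (by simp), hk2, ?_⟩
      apply ih (h + a - (k+2)) (by simp) (fun x hx => hpos x (by simp [hx]))
      · intro p hp
        have hpre' := hpre (List.replicate a U ++ (List.replicate k D ++ ([L, D] ++ p)))
          (by rw [boxForm, List.append_assoc, List.append_assoc]
              obtain ⟨t, ht⟩ := hp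
              refine ⟨t, ?_⟩
              rw [← ht]
              simp)
        simp only [countD_append, countL_append, countU_append, countD_repU, countL_repU,
          countU_repU, countD_repD, countL_repD, countU_repD] at hpre'
        have h4 : countD [L, D] + countL [L, D] = 2 ∧ countU [L, D] = 0 := by
          constructor <;> rfl
        omega
      · rw [boxForm] at hbal
        simp only [countU_append, countD_append, countL_append, countU_repU, countD_repU,
          countL_repU, countU_repD, countD_repD, countL_repD] at hbal
        have h4 : countD [L, D] + countL [L, D] = 2 ∧ countU [L, D] = 0 := by
          constructor <;> rfl
        have h5 : countD [L,D] = 1 ∧ countL [L,D] = 1 ∧ countU [L,D] = 0 := by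
          refine ⟨rfl, rfl, rfl⟩
        omega

/-! injectivity of boxForm -/

lemma repU_down_inj : ∀ (a a' : ℕ) (x x' : List Step),
    List.replicate a U ++ (D :: x) = List.replicate a' U ++ (D :: x') → a = a' ∧ x = x' := by
  intro a
  induction a with
  | zero =>
    intro a' x x' h
    cases a' with
    | zero => exact ⟨rfl, by simpa using h⟩
    | succ a'' =>
      exfalso
      rw [List.replicate_succ] at h
      simp at h
  | succ a ih =>
    intro a' x x' h
    cases a' with
    | zero =>
      exfalso
      rw [List.replicate_succ] at h
      simp at h
    | succ a'' =>
      rw [List.replicate_succ, List.replicate_succ, List.cons_append, List.cons_append,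
        List.cons.injEq] at h
      obtain ⟨h1, h2⟩ := ih a'' x x' h.2
      exact ⟨by omega, h2⟩

lemma boxForm_inj {k : ℕ} (hk : 1 ≤ k) : ∀ c c' : List ℕ,
    boxForm k c = boxForm k c' → c ≠ [] → c' ≠ [] → c = c' := by
  intro c
  induction c with
  | nil => intro c' _ hne; exact absurd rfl hne
  | cons a r ih =>
    intro c' heq _ hne'
    cases c' with
    | nil => exact absurd rfl hne'
    | cons a' r' =>
      have hD : ∀ (j : ℕ) (y : List Step), List.replicate (j+1) D ++ y = D :: (List.replicate j D ++ y) := by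
        intro j y
        rw [List.replicate_succ, List.cons_append]
      obtain ⟨k', rfl⟩ : ∃ k', k = k' + 1 := ⟨k - 1, by omega⟩
      cases r with
      | nil =>
        cases r' with
        | nil =>
          simp only [boxForm, List.append_assoc, hD] at heq
          obtain ⟨h1, h2⟩ := repU_down_inj a a' _ _ heq
          rw [h1]
        | cons b' rr' =>
          exfalso
          simp only [boxForm, List.append_assoc, hD] at heq
          obtain ⟨-, h2⟩ := repU_down_inj a a' _ _ heq
          have := congrArg List.length h2
          simp only [List.append_eq, List.length_append, List.length_replicate,
            List.length_cons, List.length_nil] at this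
          have hlen : 1 ≤ (boxForm (k'+1) (b' :: rr')).length := by
            have h3 := (counts_boxForm (k := k'+1) (b' :: rr') (by simp)).2
            have h4 := length_eq_counts (boxForm (k'+1) (b' :: rr'))
            simp only [List.length_cons] at h3
            nlinarith
          omega
      | cons b rr =>
        cases r' with
        | nil =>
          exfalso
          simp only [boxForm, List.append_assoc, hD] at heq
          obtain ⟨-, h2⟩ := repU_down_inj a a' _ _ heq
          have := congrArg List.length h2
          simp only [List.append_eq, List.length_append, List.length_replicate,
            List.length_cons, List.length_nil] at this
          have hlen : 1 ≤ (boxForm (k'+1) (b :: rr)).length := by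
            have h3 := (counts_boxForm (k := k'+1) (b :: rr) (by simp)).2
            have h4 := length_eq_counts (boxForm (k'+1) (b :: rr))
            simp only [List.length_cons] at h3
            nlinarith
          omega
        | cons b' rr' =>
          simp only [boxForm, List.append_assoc, hD] at heq
          obtain ⟨h1, h2⟩ := repU_down_inj a a' _ _ heq
          have h3 := List.append_cancel_left h2
          have h4 : boxForm (k'+1) (b :: rr) = boxForm (k'+1) (b' :: rr') := by
            apply List.append_cancel_left (as := ([L, D] : List Step))
            simpa using h3
          rw [h1, ih (b' :: rr') h4 (by simp) (by simp)]

/-! returns -/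

def retsO (h : ℕ) (w : List Step) : ℕ :=
  ((Finset.range w.length).filter (fun i =>
    (w[i]? = some Step.D ∨ w[i]? = some Step.L) ∧
    countU (w.take (i+1)) + h = countD (w.take (i+1)) + countL (w.take (i+1)))).card

lemma numReturns_eq (w : List Step) : numReturns w = retsO 0 w := by
  unfold numReturns retsO
  congr 1

lemma retsO_sum (h : ℕ) (w : List Step) : retsO h w = ∑ i ∈ Finset.range w.length,
    if ((w[i]? = some Step.D ∨ w[i]? = some Step.L) ∧
      countU (w.take (i+1)) + h = countD (w.take (i+1)) + countL (w.take (i+1))) then 1 else 0 := by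
  rw [retsO, Finset.card_filter]

lemma retsO_nil (h : ℕ) : retsO h [] = 0 := by simp [retsO]

lemma retsO_cons_U (h : ℕ) (w : List Step) : retsO h (U :: w) = retsO (h+1) w := by
  rw [retsO_sum, retsO_sum]
  rw [show (U :: w).length = w.length + 1 from rfl, Finset.sum_range_succ']
  have h0 : (if (((U :: w)[0]? = some Step.D ∨ (U :: w)[0]? = some Step.L) ∧
      countU ((U :: w).take (0+1)) + h = countD ((U :: w).take (0+1)) + countL ((U :: w).take (0+1)))
      then 1 else 0) = 0 := by
    apply if_neg
    rintro ⟨h1, -⟩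
    simp at h1
  rw [h0, Nat.add_zero]
  apply Finset.sum_congr rfl
  intro i _
  apply if_congr _ rfl rfl
  rw [List.getElem?_cons_succ, List.take_succ_cons]
  constructor
  · rintro ⟨h1, h2⟩
    refine ⟨h1, ?_⟩
    simp at h2
    omega
  · rintro ⟨h1, h2⟩
    refine ⟨h1, ?_⟩
    simp
    omega

lemma retsO_cons_D (h : ℕ) (w : List Step) (hh : 1 ≤ h) :
    retsO h (D :: w) = (if h = 1 then 1 else 0) + retsO (h-1) w := by
  rw [retsO_sum, retsO_sum]
  rw [show (D :: w).length = w.length + 1 from rfl, Finset.sum_range_succ']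
  have h0 : (if (((D :: w)[0]? = some Step.D ∨ (D :: w)[0]? = some Step.L) ∧
      countU ((D :: w).take (0+1)) + h = countD ((D :: w).take (0+1)) + countL ((D :: w).take (0+1)))
      then 1 else 0) = (if h = 1 then 1 else 0) := by
    apply if_congr _ rfl rfl
    constructor
    · rintro ⟨-, h2⟩
      simp at h2
      omega
    · intro h1
      refine ⟨Or.inl (by simp), ?_⟩
      simp
      omega
  rw [h0, Nat.add_comm]
  congr 1
  apply Finset.sum_congr rfl
  intro i _
  apply if_congr _ rfl rfl
  rw [List.getElem?_cons_succ, List.take_succ_cons]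
  constructor
  · rintro ⟨h1, h2⟩
    refine ⟨h1, ?_⟩
    simp at h2
    omega
  · rintro ⟨h1, h2⟩
    refine ⟨h1, ?_⟩
    simp
    omega

lemma retsO_cons_L (h : ℕ) (w : List Step) (hh : 1 ≤ h) :
    retsO h (L :: w) = (if h = 1 then 1 else 0) + retsO (h-1) w := by
  rw [retsO_sum, retsO_sum]
  rw [show (L :: w).length = w.length + 1 from rfl, Finset.sum_range_succ']
  have h0 : (if (((L :: w)[0]? = some Step.D ∨ (L :: w)[0]? = some Step.L) ∧
      countU ((L :: w).take (0+1)) + h = countD ((L :: w).take (0+1)) + countL ((L :: w).take (0+1)))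
      then 1 else 0) = (if h = 1 then 1 else 0) := by
    apply if_congr _ rfl rfl
    constructor
    · rintro ⟨-, h2⟩
      simp at h2
      omega
    · intro h1
      refine ⟨Or.inr (by simp), ?_⟩
      simp
      omega
  rw [h0, Nat.add_comm]
  congr 1
  apply Finset.sum_congr rfl
  intro i _
  apply if_congr _ rfl rfl
  rw [List.getElem?_cons_succ, List.take_succ_cons]
  constructor
  · rintro ⟨h1, h2⟩
    refine ⟨h1, ?_⟩
    simp at h2
    omega
  · rintro ⟨h1, h2⟩
    refine ⟨h1, ?_⟩
    simp
    omega

lemma retsO_congr {h h' : ℕ} (w : List Step) (hhh : h = h') : retsO h w = retsO h' w := by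
  rw [hhh]

lemma retsO_Urun : ∀ (a h : ℕ) (w : List Step),
    retsO h (List.replicate a U ++ w) = retsO (h + a) w := by
  intro a
  induction a with
  | zero => intro h w; simp
  | succ a ih =>
    intro h w
    rw [List.replicate_succ, List.cons_append, retsO_cons_U, ih]
    apply retsO_congr
    omega

lemma retsO_Drun : ∀ (j h : ℕ) (w : List Step), 1 ≤ h →
    retsO (h + j) (List.replicate j D ++ w) = retsO h w := by
  intro j
  induction j with
  | zero => intro h w _; simp
  | succ j ih =>
    intro h w hh
    rw [List.replicate_succ, List.cons_append, retsO_cons_D _ _ (by omega)]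
    have e1 : ¬ (h + (j+1) = 1) := by omega
    rw [if_neg e1, Nat.zero_add]
    have e2 : h + (j + 1) - 1 = h + j := by omega
    rw [e2, ih h w hh]

lemma rets_boxForm {k : ℕ} (hk : 1 ≤ k) : ∀ (c : List ℕ) h, Valid k h c →
    retsO h (boxForm k c) = 1 + zcount k h c := by
  intro c
  induction c with
  | nil => intro h hv; exact absurd hv (by simp [Valid])
  | cons a r ih =>
    intro h hv
    cases r with
    | nil =>
      obtain ⟨ha, hsum⟩ := hv
      rw [boxForm, List.append_assoc, retsO_Urun]
      have e1 : h + a = 1 + k := by omega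
      rw [retsO_congr _ e1, retsO_Drun k 1 [L] le_rfl, retsO_cons_L 1 [] le_rfl]
      rw [if_pos rfl, retsO_nil]
      simp [zcount]
    | cons b r' =>
      obtain ⟨ha, hab, hv'⟩ := hv
      rw [boxForm, List.append_assoc, List.append_assoc, retsO_Urun]
      have e1 : h + a = (h + a - k) + k := by omega
      rw [retsO_congr _ e1, retsO_Drun k (h + a - k) _ (by omega)]
      rw [show ([L, D] : List Step) ++ boxForm k (b :: r') = L :: (D :: boxForm k (b :: r')) from rfl]
      rw [retsO_cons_L _ _ (by omega)]
      have e2 : ¬ (h + a - k = 1) := by omega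
      rw [if_neg e2, Nat.zero_add]
      rw [retsO_cons_D _ _ (by omega)]
      have e3 : h + a - k - 1 - 1 = h + a - (k + 2) := by omega
      rw [e3, ih (h + a - (k+2)) hv']
      rw [zcount_cons k h a (by simp)]
      by_cases hz : h + a = k + 2
      · have e4 : h + a - k - 1 = 1 := by omega
        rw [if_pos e4, if_pos hz]
      · have e4 : ¬ (h + a - k - 1 = 1) := by omega
        rw [if_neg e4, if_neg hz]
        omega

/-! finiteness -/

lemma finite_box (k n r : ℕ) :
    Finite {w : List Step // IsBoxPath k n w ∧ numReturns w = r} := by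
  have hsub : {w : List Step | IsBoxPath k n w ∧ numReturns w = r} ⊆
      {l : List Step | l.length ≤ 2*((k+2)*n)} := by
    intro w hw
    obtain ⟨⟨hskew, hsem, -⟩, -⟩ := hw
    have hlen := length_eq_counts w
    have hbal := hskew.2.1
    unfold semilength at hsem
    simp only [Set.mem_setOf_eq]
    have hmn : (k+2)*n - 1 ≤ (k+2)*n := by omega
    omega
  have hfin := (List.finite_length_le Step (2*((k+2)*n))).subset hsub
  exact hfin.to_subtype

/-! the main bijection -/

lemma main_equiv (k n : ℕ) (hk : 1 ≤ k) (hn : 1 ≤ n) (r : ℕ) :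
    Nonempty ({c : List ℕ // Valid k 0 c ∧ c.length = n ∧ zcount k 0 c = r} ≃
      {w : List Step // IsBoxPath k n w ∧ numReturns w = r + 1}) := by
  have hmap : ∀ c : List ℕ, Valid k 0 c → c.length = n → zcount k 0 c = r →
      IsBoxPath k n (boxForm k c) ∧ numReturns (boxForm k c) = r + 1 := by
    intro c hv hlen hz
    have hne := Valid_ne_nil hv
    have hpos := Valid_pos hv
    obtain ⟨hcu, hcd⟩ := counts_boxForm (k := k) c hne
    have hsum := Valid_sum c 0 hv
    have hbal : countU (boxForm k c) = countD (boxForm k c) + countL (boxForm k c) := by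
      omega
    refine ⟨⟨⟨?_, hbal, boxForm_noUL hk c, boxForm_noLU hk c⟩, ?_, ?_⟩, ?_⟩
    · intro p hp
      have := boxForm_prefix c 0 hv p hp
      omega
    · show semilength _ = (k+2)*n - 1
      unfold semilength
      rw [hlen] at hsum
      omega
    · rw [occ_boxForm hk c hne hpos, hlen]
    · rw [numReturns_eq, rets_boxForm hk c 0 hv, hz]
      omega
  refine ⟨Equiv.ofBijective
    (fun c => ⟨boxForm k c.1, hmap c.1 c.2.1 c.2.2.1 c.2.2.2⟩) ⟨?_, ?_⟩⟩
  · rintro ⟨c, hc⟩ ⟨c', hc'⟩ h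
    simp only [Subtype.mk.injEq] at h ⊢
    exact boxForm_inj hk c c' h (Valid_ne_nil hc.1) (Valid_ne_nil hc'.1)
  · rintro ⟨w, ⟨⟨hpre, hbal, hUL, hLU⟩, hsem, hocc⟩, hret⟩
    have hpos' : 0 < (k+2)*n := Nat.mul_pos (by omega) hn
    have hdn : countD w + countL w + 1 = (k+2)*n := by
      unfold semilength at hsem
      omega
    obtain ⟨c, hclen, hcpos, rfl⟩ := shape hk w.length n w hn le_rfl hUL hLU hdn hocc
    have hcne : c ≠ [] := by
      intro h
      rw [h] at hclen
      simp at hclen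
      omega
    have hv : Valid k 0 c := Valid_transfer c 0 hcne hcpos
        (fun p hp => by have := hpre p hp; omega)
        (by rw [Nat.add_zero]; exact hbal)
    have hzc : zcount k 0 c = r := by
      have h2 := rets_boxForm hk c 0 hv
      rw [numReturns_eq] at hret
      omega
    exact ⟨⟨c, hv, hclen, hzc⟩, rfl⟩

theorem statement9' (k n j : ℕ) (hk : 1 ≤ k) (hn : 2 ≤ n) (hj1 : 1 ≤ j) (hjn : j ≤ n - 1) :
    Nat.card {w : List Step // IsBoxPath k n w ∧ numReturns w = j + 1} ≤
    Nat.card {w : List Step // IsBoxPath k n w ∧ numReturns w = j} := by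
  classical
  have hn1 : 1 ≤ n := by omega
  obtain ⟨e1⟩ := main_equiv k n hk hn1 j
  obtain ⟨e2⟩ := main_equiv k n hk hn1 (j-1)
  rw [show j - 1 + 1 = j from by omega] at e2
  haveI hf1 : Finite {w : List Step // IsBoxPath k n w ∧ numReturns w = j} := finite_box k n j
  haveI hf2 : Finite {c : List ℕ // Valid k 0 c ∧ c.length = n ∧ zcount k 0 c = j - 1} :=
    Finite.of_equiv _ e2.symm
  have hbump : ∀ c : List ℕ, Valid k 0 c → c.length = n → zcount k 0 c = j →
      Valid k 0 (bump k c) ∧ (bump k c).length = n ∧ zcount k 0 (bump k c) = j - 1 := by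
    intro c hv hlen hz
    obtain ⟨h1, h2, h3⟩ := bump_spec hk hv (by omega)
    exact ⟨h1, by omega, by omega⟩
  have hinj : Function.Injective
      (fun c : {c : List ℕ // Valid k 0 c ∧ c.length = n ∧ zcount k 0 c = j} =>
        (⟨bump k c.1, hbump c.1 c.2.1 c.2.2.1 c.2.2.2⟩ :
          {c : List ℕ // Valid k 0 c ∧ c.length = n ∧ zcount k 0 c = j - 1})) := by
    rintro ⟨c, hc⟩ ⟨c', hc'⟩ h
    simp only [Subtype.mk.injEq] at h ⊢
    exact bump_inj hk hc.1 hc'.1 (by omega) (by omega) h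
  calc Nat.card {w : List Step // IsBoxPath k n w ∧ numReturns w = j + 1}
      = Nat.card {c : List ℕ // Valid k 0 c ∧ c.length = n ∧ zcount k 0 c = j} :=
        (Nat.card_congr e1).symm
    _ ≤ Nat.card {c : List ℕ // Valid k 0 c ∧ c.length = n ∧ zcount k 0 c = j - 1} :=
        Nat.card_le_card_of_injective _ hinj
    _ = Nat.card {w : List Step // IsBoxPath k n w ∧ numReturns w = j} :=
        Nat.card_congr e2


end SDP

/-- Among `k`-box paths of size `n`, there are at least as many paths with `j`
returns as with `j+1` returns. -/
theorem statement9 (k n j : ℕ) (hk : 1 ≤ k) (hn : 2 ≤ n) (hj1 : 1 ≤ j) (hjn : j ≤ n - 1) :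
    Nat.card {w : List Step // IsBoxPath k n w ∧ numReturns w = j + 1} ≤
    Nat.card {w : List Step // IsBoxPath k n w ∧ numReturns w = j} :=
  SDP.statement9' k n j hk hn hj1 hjn
end

section
/- For all integers k ≥ 1 and n ≥ 1, the number of k-box paths of size n + 1 with exactly two long ascents equals n · ((k+1)(n+1) − 2) / 2, which is the n-th second (k+3)-gonal number (the value obtained by substituting −n for n in the formula (n/2)((K−2)n − (K−4)) for the n-th K-gonal number, with K = k+3). -/
/-!
A word without the factors `UL` and `LU` contains at most `(#D + #L + 1) / (k + 2)` occurrences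
of `U D^k L`: each occurrence spends `k + 1` down steps, and two consecutive ones are separated by
at least one further `D` or `L`. A `k`-box path of size `m` attains this bound, so it is exactly a
word `U^{a_1} D^k L D ⋯ D U^{a_m} D^k L` (`boxForm k a`) with all `a_i > 0`,
`∑ a_i = (k+2)m - 1` and the Dyck prefix condition; its long ascents are the entries `a_i ≥ 2`.
The prefix condition forces `a_1 ≥ k + 2`, so with exactly two long ascents
`a = (x, 1^d, y, 1^e)` with `d + e = n - 1`, and the prefix condition reduces to
`y ≤ (k+1)(e+1)`. Counting the pairs `(e, y)` with `e < n` and `2 ≤ y ≤ (k+1)(e+1)` gives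
`∑_{e<n} ((k+1)(e+1) - 1) = n((k+1)(n+1) - 2)/2`.
-/

open List

namespace List

lemma replicate_append_inj {α : Type*} {a : α} {m n : ℕ} {s t : List α}
    (hs : s.head? ≠ some a) (ht : t.head? ≠ some a)
    (h : replicate m a ++ s = replicate n a ++ t) : m = n ∧ s = t := by
  induction m generalizing n with
  | zero => cases n <;> simp_all [replicate_succ]
  | succ m ih =>
    cases n with
    | zero =>
      simp only [replicate_succ, replicate_zero, nil_append, cons_append] at h
      simp [← h] at ht
    | succ n => simpa using ih (by simpa [replicate_succ] using h)

lemma exists_eq_replicate_one_append_of_countP_eq_one {t : List ℕ} (hpos : ∀ v ∈ t, 0 < v)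
    (h : t.countP (2 ≤ ·) = 1) :
    ∃ d y e, 2 ≤ y ∧ t = replicate d 1 ++ y :: replicate e 1 := by
  induction t with
  | nil => simp at h
  | cons z t ih =>
    have hz := hpos z mem_cons_self
    have hpos' := fun v hv => hpos v (mem_cons_of_mem z hv)
    rw [countP_cons] at h
    by_cases hz2 : 2 ≤ z
    · have hle : ∀ v ∈ t, v ≤ 1 := by simpa [hz2] using h
      have hone : ∀ v ∈ t, v = 1 := fun v hv => le_antisymm (hle v hv) (hpos' v hv)
      exact ⟨0, z, t.length, hz2, by simpa using eq_replicate_iff.2 ⟨rfl, hone⟩⟩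
    · obtain ⟨d, y, e, hy, rfl⟩ := ih hpos' (by simpa [hz2] using h)
      exact ⟨d + 1, y, e, hy, by simp [replicate_succ, show z = 1 by omega]⟩

end List

def Compatible (x y : Step) : Prop :=
  ¬ (x = Step.U ∧ y = Step.L) ∧ ¬ (x = Step.L ∧ y = Step.U)

lemma not_infix_UL_LU_iff_isChain {w : List Step} :
    (¬ [Step.U, Step.L] <:+: w ∧ ¬ [Step.L, Step.U] <:+: w) ↔ w.IsChain Compatible := by
  rw [isChain_iff_forall_rel_of_append_cons_cons]
  constructor
  · rintro ⟨hUL, hLU⟩ a b s t rfl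
    refine ⟨fun ⟨ha, hb⟩ => hUL ⟨s, t, ?_⟩, fun ⟨ha, hb⟩ => hLU ⟨s, t, ?_⟩⟩ <;>
      simp [ha, hb]
  · intro h
    constructor <;> rintro ⟨s, t, rfl⟩
    · exact (h (a := .U) (b := .L) (l₁ := s) (l₂ := t) (by simp)).1 ⟨rfl, rfl⟩
    · exact (h (a := .L) (b := .U) (l₁ := s) (l₂ := t) (by simp)).2 ⟨rfl, rfl⟩

def StaysNonneg (c : ℤ) (w : List Step) : Prop :=
  ∀ p, p <+: w → (countD p + countL p : ℤ) ≤ c + countU p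

lemma staysNonneg_zero_iff {w : List Step} :
    StaysNonneg 0 w ↔ ∀ p, p <+: w → countD p + countL p ≤ countU p := by
  simp only [StaysNonneg, zero_add]
  exact forall₂_congr fun _ _ => by norm_cast

def stepHeight : Step → ℤ
  | .U => 1
  | .D => -1
  | .L => -1

namespace StaysNonneg

variable {c : ℤ}

lemma nonneg {w : List Step} (h : StaysNonneg c w) : 0 ≤ c := by
  simpa [countU, countD, countL] using h [] nil_prefix

@[simp] lemma nil_iff : StaysNonneg c [] ↔ 0 ≤ c := by
  simp [StaysNonneg, countU, countD, countL]

lemma cons_iff {x : Step} {w : List Step} :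
    StaysNonneg c (x :: w) ↔ 0 ≤ c ∧ StaysNonneg (c + stepHeight x) w := by
  simp only [StaysNonneg, prefix_cons_iff, forall_eq_or_imp, forall_exists_index, and_imp]
  refine and_congr (by simp [countU, countD, countL]) ⟨fun h q hq => ?_, fun h p q hp hq => ?_⟩
  · have := h (x :: q) q rfl hq
    cases x <;> simp [countU, countD, countL, stepHeight] at this ⊢ <;> omega
  · have := h q hq
    subst hp
    cases x <;> simp [countU, countD, countL, stepHeight] at this ⊢ <;> omega

lemma replicate_U_append_iff {a : ℕ} {w : List Step} :
    StaysNonneg c (replicate a Step.U ++ w) ↔ 0 ≤ c ∧ StaysNonneg (c + a) w := by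
  induction a generalizing c with
  | zero => simpa using fun h => h.nonneg
  | succ a ih =>
    rw [replicate_succ, cons_append, cons_iff, ih, stepHeight,
      show c + 1 + (a : ℤ) = c + ↑(a + 1) by push_cast; ring]
    exact and_congr_right fun hc => and_iff_right (by omega)

lemma append_iff_of_forall_ne_U {u w : List Step} (hu : ∀ x ∈ u, x ≠ Step.U) :
    StaysNonneg c (u ++ w) ↔ StaysNonneg (c - u.length) w := by
  induction u generalizing c with
  | nil => simp
  | cons x u ih =>
    have hx : stepHeight x = -1 := by
      cases x <;> simp_all [stepHeight]
    rw [cons_append, cons_iff, ih fun y hy => hu y (mem_cons_of_mem x hy), hx, length_cons]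
    push_cast
    rw [show c + -1 - u.length = c - (u.length + 1) by ring]
    exact and_iff_right_of_imp fun h => by linarith [h.nonneg]

end StaysNonneg

section BoxForm

variable {k : ℕ}

lemma boxForm_cons (x : ℕ) (r : List ℕ) :
    boxForm k (x :: r) = replicate x Step.U ++ replicate k Step.D ++
      Step.L :: (if r = [] then [] else Step.D :: boxForm k r) := by
  cases r <;> simp [boxForm]

lemma boxForm_succ_cons (b : ℕ) (s : List ℕ) :
    boxForm k ((b + 1) :: s) = Step.U :: boxForm k (b :: s) := by
  simp [boxForm_cons, replicate_succ]

lemma boxForm_succ_cons_eq_append_boxFactor (m : ℕ) (r : List ℕ) :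
    boxForm k ((m + 1) :: r) = replicate m Step.U ++ boxFactor k ++
      (if r = [] then [] else Step.D :: boxForm k r) := by
  simp [boxForm_cons, boxFactor, replicate_succ']

lemma boxForm_injective : Function.Injective (boxForm k) := by
  intro a b h
  induction a generalizing b with
  | nil => cases b <;> simp_all [boxForm_cons, boxForm]
  | cons x r ih =>
    cases b with
    | nil => simp [boxForm_cons, boxForm] at h
    | cons y s =>
      simp only [boxForm_cons, append_assoc] at h
      obtain ⟨rfl, h⟩ := replicate_append_inj (by cases k <;> simp [replicate_succ])
        (by cases k <;> simp [replicate_succ]) h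
      have h := append_cancel_left h
      cases r <;> cases s <;> simp at h
      · rfl
      · exact congrArg (x :: ·) (ih h)

lemma countU_boxForm (a : List ℕ) : countU (boxForm k a) = a.sum := by
  induction a with
  | nil => rfl
  | cons x r ih =>
    rw [boxForm_cons]
    split_ifs with hr
    · simp [hr, countU, count_replicate]
    · simp [countU, count_replicate] at ih ⊢
      omega

lemma countD_add_countL_boxForm {a : List ℕ} (ha : a ≠ []) :
    countD (boxForm k a) + countL (boxForm k a) + 1 = (k + 2) * a.length := by
  induction a with
  | nil => exact absurd rfl ha
  | cons x r ih =>
    rw [boxForm_cons]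
    split_ifs with hr
    · simp [hr, countD, countL, count_replicate]
    · have := ih hr
      simp [countD, countL, count_replicate] at this ⊢
      rw [mul_add]
      omega

lemma isChain_compatible_boxForm (hk : 1 ≤ k) {a : List ℕ} (ha : ∀ x ∈ a, 0 < x) :
    (boxForm k a).IsChain Compatible := by
  induction a with
  | nil => exact .nil
  | cons x r ih =>
    obtain ⟨m, rfl⟩ := Nat.exists_eq_add_one.2 (ha x mem_cons_self)
    obtain ⟨j, rfl⟩ := Nat.exists_eq_add_one.2 hk
    have hr := ih fun y hy => ha y (mem_cons_of_mem _ hy)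
    have hrep (z : Step) (n : ℕ) : (replicate n z).IsChain Compatible :=
      isChain_replicate_of_rel n (by cases z <;> simp [Compatible])
    rw [boxForm_cons]
    split_ifs
    · simp [isChain_append, hrep, Compatible, getLast?_replicate, head?_replicate]
    · simp [isChain_append, isChain_cons, hrep, hr, Compatible, getLast?_replicate,
        head?_replicate]

end BoxForm

section LongAscents

lemma numLongAscents_append {u v : List Step}
    (h : u.getLast? ≠ some Step.U ∨ v.head? ≠ some Step.U) :
    numLongAscents (u ++ v) = numLongAscents u + numLongAscents v := by
  simp only [numLongAscents, Finset.card_filter, length_append, Finset.sum_range_add]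
  rw [getLast?_eq_getElem?, head?_eq_getElem?] at h
  have hright (i : ℕ) : (u ++ v)[u.length + i]? = v[i]? := by
    simp [getElem?_append_right]
  congr 1 <;> refine Finset.sum_congr rfl fun i hi => ?_ <;> rw [Finset.mem_range] at hi
  · have hleft (j : ℕ) (hj : j < u.length) : (u ++ v)[j]? = u[j]? := getElem?_append_left hj
    rw [hleft i hi]
    by_cases hi1 : i + 1 < u.length
    · rw [hleft _ hi1, hleft _ (by omega)]
    · obtain rfl : i = u.length - 1 := by omega
      rw [show u.length - 1 + 1 = u.length + 0 by omega, hright, add_zero,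
        getElem?_eq_none le_rfl, if_neg (by tauto), if_neg (by simp)]
  · rw [hright, add_assoc, hright]
    cases i with
    | zero =>
      rcases u.eq_nil_or_concat with rfl | ⟨u, x, rfl⟩
      · simp
      · by_cases hv : v[0] = Step.U <;> simp_all
    | succ i => rw [show u.length + (i + 1) - 1 = u.length + i by omega, hright]; simp

lemma numLongAscents_eq_zero {w : List Step} (hw : ∀ x ∈ w, x ≠ Step.U) :
    numLongAscents w = 0 := by
  refine Finset.card_eq_zero.2 (Finset.filter_false_of_mem fun i hi h => ?_)
  rw [Finset.mem_range] at hi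
  exact hw _ (getElem_mem hi) (by simpa [getElem?_eq_getElem hi] using h.1)

lemma numLongAscents_cons_of_ne_U {x : Step} (hx : x ≠ Step.U) (w : List Step) :
    numLongAscents (x :: w) = numLongAscents w := by
  rw [← singleton_append, numLongAscents_append (.inl (by simpa using hx)),
    numLongAscents_eq_zero (by simpa using hx), zero_add]

lemma numLongAscents_replicate_U (a : ℕ) :
    numLongAscents (replicate a Step.U) = if 2 ≤ a then 1 else 0 := by
  have : (Finset.range a).filter (fun i => (replicate a Step.U)[i]? = some Step.U ∧
      (replicate a Step.U)[i + 1]? = some Step.U ∧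
      (i = 0 ∨ (replicate a Step.U)[i - 1]? ≠ some Step.U)) = if 2 ≤ a then {0} else ∅ := by
    ext i
    split_ifs <;> simp [getElem?_replicate] <;> omega
  rw [numLongAscents, length_replicate, this]
  split_ifs <;> rfl

lemma numLongAscents_boxForm (k : ℕ) (a : List ℕ) :
    numLongAscents (boxForm k a) = a.countP (2 ≤ ·) := by
  induction a with
  | nil => rfl
  | cons x r ih =>
    have hDL : ∀ y ∈ replicate k Step.D ++ [Step.L], y ≠ Step.U := by
      simp [or_imp, forall_and]
    have htail : numLongAscents (if r = [] then [] else Step.D :: boxForm k r) =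
        numLongAscents (boxForm k r) := by
      split_ifs with hr
      · simp [hr, boxForm]
      · exact numLongAscents_cons_of_ne_U (by simp) _
    rw [boxForm_cons, append_assoc,
      numLongAscents_append (.inr (by cases k <;> simp [replicate_succ])), append_cons,
      numLongAscents_append (.inl (by simp)), numLongAscents_eq_zero hDL, htail, ih,
      numLongAscents_replicate_U, countP_cons]
    simp [add_comm]

end LongAscents

section Occurrences

lemma numOccurrences_cons (f : List Step) (x : Step) (w : List Step) :
    numOccurrences f (x :: w) = numOccurrences f w + if f <+: x :: w then 1 else 0 := by
  simp only [numOccurrences, Finset.card_filter, length_cons]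
  rw [Finset.sum_range_succ']
  simp

variable {k : ℕ}

@[simp] lemma numOccurrences_boxFactor_nil : numOccurrences (boxFactor k) [] = 0 := by
  simp [numOccurrences, boxFactor]

lemma numOccurrences_boxFactor_cons_of_ne_U {x : Step} (hx : x ≠ Step.U) (w : List Step) :
    numOccurrences (boxFactor k) (x :: w) = numOccurrences (boxFactor k) w := by
  simp [numOccurrences_cons, boxFactor, Ne.symm hx]

lemma numOccurrences_boxFactor_append_of_forall_ne_U {u : List Step}
    (hu : ∀ x ∈ u, x ≠ Step.U) (w : List Step) :
    numOccurrences (boxFactor k) (u ++ w) = numOccurrences (boxFactor k) w := by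
  induction u with
  | nil => rfl
  | cons x u ih =>
    rw [cons_append, numOccurrences_boxFactor_cons_of_ne_U (hu x mem_cons_self),
      ih fun y hy => hu y (mem_cons_of_mem x hy)]

lemma numOccurrences_boxFactor_append (w : List Step) :
    numOccurrences (boxFactor k) (boxFactor k ++ w) = numOccurrences (boxFactor k) w + 1 := by
  rw [boxFactor, cons_append, numOccurrences_cons,
    if_pos (cons_prefix_cons.2 ⟨rfl, prefix_append _ _⟩), ← boxFactor,
    numOccurrences_boxFactor_append_of_forall_ne_U (by simp [or_imp, forall_and])]

lemma numOccurrences_boxFactor_U_U (w : List Step) :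
    numOccurrences (boxFactor k) (Step.U :: Step.U :: w) =
      numOccurrences (boxFactor k) (Step.U :: w) := by
  rw [numOccurrences_cons, if_neg]
  · rfl
  · cases k <;> simp [boxFactor, replicate_succ]

lemma numOccurrences_replicate_U_append_boxFactor (m : ℕ) (w : List Step) :
    numOccurrences (boxFactor k) (replicate m Step.U ++ boxFactor k ++ w) =
      numOccurrences (boxFactor k) w + 1 := by
  induction m with
  | zero => exact numOccurrences_boxFactor_append w
  | succ m ih =>
    obtain ⟨t, ht⟩ : ∃ t, replicate m Step.U ++ boxFactor k ++ w = Step.U :: t := by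
      cases m <;> simp [boxFactor, replicate_succ]
    rw [replicate_succ, cons_append, cons_append, ht, numOccurrences_boxFactor_U_U, ← ht, ih]

lemma numOccurrences_boxForm {a : List ℕ} (ha : ∀ x ∈ a, 0 < x) :
    numOccurrences (boxFactor k) (boxForm k a) = a.length := by
  induction a with
  | nil => exact numOccurrences_boxFactor_nil
  | cons x r ih =>
    obtain ⟨m, rfl⟩ := Nat.exists_eq_add_one.2 (ha x mem_cons_self)
    rw [boxForm_succ_cons_eq_append_boxFactor, numOccurrences_replicate_U_append_boxFactor,
      length_cons]
    split_ifs with hr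
    · simp [hr]
    · rw [numOccurrences_boxFactor_cons_of_ne_U (by simp),
        ih fun y hy => ha y (mem_cons_of_mem _ hy)]

end Occurrences

section Structure

variable {k : ℕ}

lemma countD_add_countL_cons_of_ne_U {x : Step} (hx : x ≠ Step.U) (w : List Step) :
    countD (x :: w) + countL (x :: w) = countD w + countL w + 1 := by
  cases x <;> simp_all [countD, countL] <;> omega

lemma countD_add_countL_boxFactor_append (w : List Step) :
    countD (boxFactor k ++ w) + countL (boxFactor k ++ w) = countD w + countL w + (k + 1) := by
  simp [boxFactor, countD, countL, count_replicate]
  omega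

lemma ne_U_of_isChain_boxFactor_append {y : Step} {v : List Step}
    (hw : (boxFactor k ++ y :: v).IsChain Compatible) : y ≠ Step.U := by
  have := hw.infix (l₁ := [Step.L, y]) ⟨Step.U :: replicate k Step.D, v, by simp [boxFactor]⟩
  simpa [Compatible] using this

lemma mul_numOccurrences_boxFactor_le {w : List Step} (hw : w.IsChain Compatible) :
    (k + 2) * numOccurrences (boxFactor k) w ≤ countD w + countL w + 1 := by
  induction hN : w.length using Nat.strong_induction_on generalizing w with
  | _ N ih =>
  subst hN
  rcases w with _ | ⟨x, w⟩
  · simp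
  have ihw := ih w.length (by simp) (w := w) hw.tail rfl
  by_cases hx : x = Step.U
  swap
  · rw [numOccurrences_boxFactor_cons_of_ne_U hx, countD_add_countL_cons_of_ne_U hx]
    omega
  subst hx
  by_cases hpre : boxFactor k <+: Step.U :: w
  swap
  · rw [numOccurrences_cons, if_neg hpre]
    simpa [countD, countL] using ihw
  obtain ⟨r, hr⟩ := hpre
  rw [← hr] at hw ⊢
  rw [numOccurrences_boxFactor_append, countD_add_countL_boxFactor_append]
  rcases r with _ | ⟨y, v⟩
  · simp
  have hy := ne_U_of_isChain_boxFactor_append hw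
  rw [numOccurrences_boxFactor_cons_of_ne_U hy, countD_add_countL_cons_of_ne_U hy]
  have ihv := ih v.length (by simp [← hr, boxFactor]; omega) (w := v) hw.right_of_append.tail rfl
  rw [mul_add]
  omega

-- Equality leaves no room for anything but a single `D` between consecutive factors `U D^k L`.
lemma exists_boxForm_of_mul_numOccurrences_eq {w : List Step} (hw : w.IsChain Compatible)
    (heq : (k + 2) * numOccurrences (boxFactor k) w = countD w + countL w + 1) :
    ∃ a, a ≠ [] ∧ (∀ x ∈ a, 0 < x) ∧ w = boxForm k a := by
  induction hN : w.length using Nat.strong_induction_on generalizing w with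
  | _ N ih =>
  subst hN
  rcases w with _ | ⟨x, w⟩
  · simp at heq
  by_cases hx : x = Step.U
  swap
  · rw [numOccurrences_boxFactor_cons_of_ne_U hx, countD_add_countL_cons_of_ne_U hx] at heq
    have := mul_numOccurrences_boxFactor_le (k := k) (w := w) hw.tail
    omega
  subst hx
  by_cases hpre : boxFactor k <+: Step.U :: w
  swap
  · rw [numOccurrences_cons, if_neg hpre] at heq
    obtain ⟨_ | ⟨b, s⟩, hne, hpos, rfl⟩ :=
      ih w.length (by simp) (w := w) hw.tail (by simpa [countD, countL] using heq) rfl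
    · exact absurd rfl hne
    refine ⟨(b + 1) :: s, cons_ne_nil _ _, ?_, (boxForm_succ_cons b s).symm⟩
    simp only [mem_cons, forall_eq_or_imp] at hpos ⊢
    exact ⟨b.succ_pos, hpos.2⟩
  obtain ⟨r, hr⟩ := hpre
  rw [← hr] at hw heq ⊢
  rw [numOccurrences_boxFactor_append, countD_add_countL_boxFactor_append] at heq
  rcases r with _ | ⟨y, v⟩
  · exact ⟨[1], by simp, by simp, by simp [boxForm, boxFactor]⟩
  have hy := ne_U_of_isChain_boxFactor_append hw
  rw [numOccurrences_boxFactor_cons_of_ne_U hy, countD_add_countL_cons_of_ne_U hy] at heq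
  obtain ⟨_ | ⟨b, s⟩, hne, hpos, rfl⟩ := ih v.length (by simp [← hr, boxFactor]; omega)
    (w := v) hw.right_of_append.tail (by rw [mul_add] at heq; omega) rfl
  · exact absurd rfl hne
  obtain ⟨b, rfl⟩ := Nat.exists_eq_add_one.2 (hpos _ mem_cons_self)
  cases y with
  | U => exact absurd rfl hy
  | L => simpa [boxForm_succ_cons, Compatible] using hw.right_of_append
  | D =>
    refine ⟨1 :: (b + 1) :: s, cons_ne_nil _ _, by simpa using hpos, ?_⟩
    simp [boxForm_succ_cons_eq_append_boxFactor]

end Structure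

lemma IsBoxPath.exists_eq_boxForm {k n : ℕ} {w : List Step} (hn : 0 < n)
    (hw : IsBoxPath k n w) : ∃ a, a ≠ [] ∧ (∀ x ∈ a, 0 < x) ∧ w = boxForm k a := by
  obtain ⟨⟨-, hbal, hUL, hLU⟩, hsl, hocc⟩ := hw
  refine exists_boxForm_of_mul_numOccurrences_eq (not_infix_UL_LU_iff_isChain.1 ⟨hUL, hLU⟩) ?_
  rw [semilength] at hsl
  rw [hocc]
  have := Nat.mul_pos (show 0 < k + 2 by omega) hn
  omega

lemma isBoxPath_boxForm_iff {k n : ℕ} (hk : 1 ≤ k) {a : List ℕ} (ha : a ≠ [])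
    (hpos : ∀ x ∈ a, 0 < x) :
    IsBoxPath k n (boxForm k a) ↔
      a.length = n ∧ a.sum + 1 = (k + 2) * n ∧ StaysNonneg 0 (boxForm k a) := by
  have hDL := countD_add_countL_boxForm (k := k) ha
  have hlen : 0 < a.length := length_pos_iff.2 ha
  rw [IsBoxPath, IsSkewDyck, semilength, numOccurrences_boxForm hpos, countU_boxForm,
    ← staysNonneg_zero_iff, not_infix_UL_LU_iff_isChain]
  simp only [isChain_compatible_boxForm hk hpos, and_true]
  constructor
  · rintro ⟨⟨hS, -⟩, hsum, rfl⟩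
    refine ⟨rfl, ?_, hS⟩
    have := Nat.mul_pos (show 0 < k + 2 by omega) hlen
    omega
  · rintro ⟨rfl, hsum, hS⟩
    refine ⟨⟨hS, ?_⟩, ?_, rfl⟩ <;> omega

namespace StaysNonneg

variable {c : ℤ} {k : ℕ}

lemma boxForm_cons_iff {x : ℕ} {r : List ℕ} :
    StaysNonneg c (boxForm k (x :: r)) ↔
      0 ≤ c ∧ StaysNonneg (c + x - (k + 1)) (if r = [] then [] else Step.D :: boxForm k r) := by
  rw [boxForm_cons, append_assoc, replicate_U_append_iff, append_cons,
    append_iff_of_forall_ne_U (by simp [or_imp, forall_and])]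
  simp only [length_append, length_replicate, length_singleton]
  push_cast
  rw [sub_add_eq_sub_sub, sub_sub]

lemma boxForm_singleton_iff {x : ℕ} :
    StaysNonneg c (boxForm k [x]) ↔ 0 ≤ c ∧ k + 1 ≤ c + x := by
  rw [boxForm_cons_iff, if_pos rfl, nil_iff, sub_nonneg]

lemma boxForm_cons_iff_of_ne_nil {x : ℕ} {r : List ℕ} (hr : r ≠ []) :
    StaysNonneg c (boxForm k (x :: r)) ↔
      0 ≤ c ∧ StaysNonneg (c + x - (k + 2)) (boxForm k r) := by
  rw [boxForm_cons_iff, if_neg hr, cons_iff, stepHeight,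
    show c + x - (k + 1) + -1 = c + x - (k + 2) by ring]
  exact and_congr_right fun hc => and_iff_right_of_imp fun h => by linarith [h.nonneg]

lemma boxForm_replicate_one_append_iff {d : ℕ} {r : List ℕ} (hr : r ≠ []) :
    StaysNonneg c (boxForm k (replicate d 1 ++ r)) ↔
      StaysNonneg (c - d * (k + 1)) (boxForm k r) := by
  induction d generalizing c with
  | zero => simp
  | succ d ih =>
    rw [replicate_succ, cons_append, boxForm_cons_iff_of_ne_nil (by simp [hr]), ih]
    push_cast
    rw [show c + 1 - (k + 2) - d * (k + 1) = c - (d + 1) * (k + 1) by ring]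
    refine and_iff_right_of_imp fun h => ?_
    nlinarith [h.nonneg]

lemma boxForm_cons_replicate_one_iff {y e : ℕ} :
    StaysNonneg c (boxForm k (y :: replicate e 1)) ↔ 0 ≤ c ∧ (k + 1) * (e + 1) ≤ c + y := by
  induction e generalizing c y with
  | zero => simp [boxForm_singleton_iff]
  | succ e ih =>
    rw [replicate_succ, boxForm_cons_iff_of_ne_nil (by simp), ih]
    push_cast
    constructor
    · rintro ⟨hc, -, h⟩; exact ⟨hc, by linarith⟩
    · rintro ⟨hc, h⟩; exact ⟨hc, by nlinarith, by linarith⟩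

end StaysNonneg

lemma staysNonneg_zero_boxForm_twoPeaks_iff {k x y d e : ℕ} :
    StaysNonneg 0 (boxForm k (x :: (replicate d 1 ++ y :: replicate e 1))) ↔
      (k + 1) * (d + 1) + 1 ≤ x ∧ (k + 1) * (d + 1) + (k + 1) * (e + 1) + 1 ≤ x + y := by
  rw [StaysNonneg.boxForm_cons_iff_of_ne_nil (by simp),
    StaysNonneg.boxForm_replicate_one_append_iff (by simp),
    StaysNonneg.boxForm_cons_replicate_one_iff]
  simp only [le_refl, true_and]
  constructor <;> rintro ⟨h1, h2⟩ <;> constructor <;> zify at * <;> linarith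

-- The ascent lengths `x, 1^(n-1-e), y, 1^e` of a `k`-box path of size `n + 1` with exactly two
-- long ascents; the semilength forces `x + y = (k+1)(n+1) + 1`.
def twoAscentShape (k n e y : ℕ) : List ℕ :=
  ((k + 1) * (n + 1) + 1 - y) :: (replicate (n - 1 - e) 1 ++ y :: replicate e 1)

lemma twoAscentShape_inj {k n e e' y y' : ℕ} (hy : 2 ≤ y) (hy' : 2 ≤ y')
    (h : twoAscentShape k n e y = twoAscentShape k n e' y') : e = e' ∧ y = y' := by
  rw [twoAscentShape, twoAscentShape, cons.injEq] at h
  obtain ⟨-, h⟩ := replicate_append_inj (by simp; omega) (by simp; omega) h.2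
  rw [cons.injEq] at h
  exact ⟨by simpa using congrArg length h.2, h.1⟩

lemma IsBoxPath.exists_twoAscentShape {k n : ℕ} (hk : 1 ≤ k) {w : List Step}
    (hw : IsBoxPath k (n + 1) w) (hla : numLongAscents w = 2) :
    ∃ e y, e < n ∧ 2 ≤ y ∧ y ≤ (k + 1) * (e + 1) ∧
      w = boxForm k (twoAscentShape k n e y) := by
  obtain ⟨a, ha, hpos, rfl⟩ := hw.exists_eq_boxForm n.succ_pos
  obtain ⟨hlen, hsum, hS⟩ := (isBoxPath_boxForm_iff hk ha hpos).1 hw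
  rw [numLongAscents_boxForm] at hla
  obtain ⟨x, t, rfl⟩ := exists_cons_of_ne_nil ha
  have ht : t ≠ [] := by rintro rfl; simp at hla; split_ifs at hla; omega
  have hx : k + 2 ≤ x := by
    have := ((StaysNonneg.boxForm_cons_iff_of_ne_nil ht).1 hS).2.nonneg
    omega
  have hct : t.countP (2 ≤ ·) = 1 := by
    rw [countP_cons, if_pos (decide_eq_true (by omega))] at hla
    omega
  obtain ⟨d, y, e, hy, rfl⟩ := exists_eq_replicate_one_append_of_countP_eq_one
    (fun v hv => hpos v (mem_cons_of_mem x hv)) hct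
  rw [staysNonneg_zero_boxForm_twoPeaks_iff] at hS
  simp [sum_replicate] at hlen hsum
  obtain rfl : n = d + e + 1 := by omega
  have e1 : (k + 2) * (d + e + 1 + 1) =
      (k + 1) * (d + 1) + (k + 1) * (e + 1) + (d + e + 2) := by ring
  have e2 : (k + 1) * (d + e + 1 + 1) = (k + 1) * (d + 1) + (k + 1) * (e + 1) := by ring
  refine ⟨e, y, by omega, hy, by omega, ?_⟩
  rw [twoAscentShape, show d + e + 1 - 1 - e = d by omega,
    show (k + 1) * (d + e + 1 + 1) + 1 - y = x by omega]

lemma isBoxPath_boxForm_twoAscentShape {k n e y : ℕ} (hk : 1 ≤ k) (he : e < n) (hy2 : 2 ≤ y)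
    (hy : y ≤ (k + 1) * (e + 1)) :
    IsBoxPath k (n + 1) (boxForm k (twoAscentShape k n e y)) ∧
      numLongAscents (boxForm k (twoAscentShape k n e y)) = 2 := by
  obtain ⟨d, rfl⟩ : ∃ d, n = d + e + 1 := ⟨n - 1 - e, by omega⟩
  have e2 : (k + 1) * (d + e + 1 + 1) = (k + 1) * (d + 1) + (k + 1) * (e + 1) := by ring
  have hd1 : k + 1 ≤ (k + 1) * (d + 1) := Nat.le_mul_of_pos_right _ d.succ_pos
  rw [twoAscentShape, show d + e + 1 - 1 - e = d by omega]
  refine ⟨(isBoxPath_boxForm_iff hk (cons_ne_nil _ _) ?_).2 ⟨?_, ?_, ?_⟩, ?_⟩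
  · simp only [mem_cons, mem_append, mem_replicate]
    rintro v (rfl | ⟨-, rfl⟩ | rfl | ⟨-, rfl⟩) <;> omega
  · simp; omega
  · have e3 : (k + 2) * (d + e + 1 + 1) = (k + 1) * (d + e + 1 + 1) + (d + e + 2) := by ring
    simp [sum_replicate]
    omega
  · rw [staysNonneg_zero_boxForm_twoPeaks_iff]
    omega
  · rw [numLongAscents_boxForm]
    simp [countP_replicate, hy2, show 2 ≤ (k + 1) * (d + e + 1 + 1) + 1 - y by omega]

lemma card_twoAscentBoxPaths {k : ℕ} (hk : 1 ≤ k) (n : ℕ) :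
    Nat.card {w : List Step // IsBoxPath k (n + 1) w ∧ numLongAscents w = 2} =
      ∑ e ∈ Finset.range n, ((k + 1) * (e + 1) - 1) := by
  let params : Finset (Σ _ : ℕ, ℕ) :=
    (Finset.range n).sigma fun e => Finset.Icc 2 ((k + 1) * (e + 1))
  let path (p : Σ _ : ℕ, ℕ) : List Step := boxForm k (twoAscentShape k n p.1 p.2)
  have hmem (w : List Step) :
      IsBoxPath k (n + 1) w ∧ numLongAscents w = 2 ↔ w ∈ params.image path := by
    simp only [Finset.mem_image, Finset.mem_sigma, Finset.mem_range, Finset.mem_Icc,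
      Sigma.exists, params, path]
    constructor
    · rintro ⟨hw, hla⟩
      obtain ⟨e, y, he, hy2, hy, rfl⟩ := hw.exists_twoAscentShape hk hla
      exact ⟨e, y, ⟨he, hy2, hy⟩, rfl⟩
    · rintro ⟨e, y, ⟨he, hy2, hy⟩, rfl⟩
      exact isBoxPath_boxForm_twoAscentShape hk he hy2 hy
  have hinj : Set.InjOn path params := by
    rintro ⟨e, y⟩ hp ⟨e', y'⟩ hq h
    simp only [Finset.coe_sigma, Set.mem_sigma_iff, Finset.coe_range, Set.mem_Iio,
      Finset.coe_Icc, Set.mem_Icc, params] at hp hq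
    obtain ⟨rfl, rfl⟩ := twoAscentShape_inj hp.2.1 hq.2.1 (boxForm_injective h)
    rfl
  rw [Nat.card_congr (Equiv.subtypeEquivRight hmem), Nat.card_eq_finsetCard,
    Finset.card_image_of_injOn hinj, Finset.card_sigma]
  exact Finset.sum_congr rfl fun e _ => by rw [Nat.card_Icc]; omega

lemma sum_range_mul_succ_sub_one (k n : ℕ) :
    (∑ e ∈ Finset.range n, (((k + 1) * (e + 1) - 1 : ℕ) : ℚ)) =
      n * ((k + 1) * (n + 1) - 2) / 2 := by
  induction n with
  | zero => simp
  | succ n ih =>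
    rw [Finset.sum_range_succ, ih, Nat.cast_sub (Nat.one_le_iff_ne_zero.2 (by positivity))]
    push_cast
    ring

theorem statement14_general (k n : ℕ) (hk : 1 ≤ k) :
    (Nat.card {w : List Step // IsBoxPath k (n+1) w ∧ numLongAscents w = 2} : ℚ) =
      (n : ℚ) * (((k : ℚ)+1) * ((n : ℚ)+1) - 2) / 2 ∧
    (n : ℚ) * (((k : ℚ)+1) * ((n : ℚ)+1) - 2) / 2 =
      (-(n : ℚ)/2) * ((((k : ℚ)+3) - 2) * (-(n : ℚ)) - (((k : ℚ)+3) - 4)) := by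
  refine ⟨?_, by ring⟩
  rw [card_twoAscentBoxPaths hk, Nat.cast_sum, sum_range_mul_succ_sub_one]

/-- The number of `k`-box paths of size `n+1` with exactly two long ascents equals
`n((k+1)(n+1) - 2)/2`, the `n`-th second `(k+3)`-gonal number (obtained by
substituting `-n` into the formula `(n/2)((K-2)n - (K-4))` with `K = k+3`). -/
theorem statement14 (k n : ℕ) (hk : 1 ≤ k) (hn : 1 ≤ n) :
    (Nat.card {w : List Step // IsBoxPath k (n+1) w ∧ numLongAscents w = 2} : ℚ) =
      (n : ℚ) * (((k : ℚ)+1) * ((n : ℚ)+1) - 2) / 2 ∧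
    (n : ℚ) * (((k : ℚ)+1) * ((n : ℚ)+1) - 2) / 2 =
      (-(n : ℚ)/2) * ((((k : ℚ)+3) - 2) * (-(n : ℚ)) - (((k : ℚ)+3) - 4)) :=
  statement14_general k n hk
end
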